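/- arXiv:2103.03777 — 6 statements merged into one kernel-verified Lean document; each statement's English description precedes it below -/
import Mathlib

section
/- For every prime power q, the group PSL(2,q), i.e. the quotient of SL(2, F_q) by its center, is strongly symmetric: it is generated by two elements, and for every pair x, y with ⟨x,y⟩ = PSL(2,q) there exists an automorphism φ of PSL(2,q) with φ(x) = x⁻¹ and φ(y) = y⁻¹. -/
/-!
Generation. `SL(2, q)` is generated by its elementary transvections. For a generator `ν` of
`F_qˣ` with `ν² ≠ 1`, the pair `D = diag(ν, ν⁻¹)`, `ST` yields the upper transvection with
coefficient `ν² - 1`; conjugation by `D` multiplies coefficients by `ν²`, hence by every square,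
and every element of a finite field is a difference of two squares, so all upper transvections
are reached, and `ST` conjugates them onto the lower ones. When `ν² = 1` (`q ≤ 3`) the two
elementary transvections with coefficient `1` already generate.

Symmetry. For `2 × 2` matrices the commutator `C = XY - YX` satisfies `C X = adj(X) C` and
`C Y = adj(Y) C`. If `C` is invertible, conjugation by `C` inverts `X` and `Y` and descends to
`PSL(2, q)`. If `det C = 0`, either `C = 0`, so `x` and `y` commute, the group they generate is
abelian and inversion is an automorphism; or `ker C` is a line fixed by `X` and `Y`, so `x` and
`y` lie in a point stabilizer of the action on the projective line and do not generate.
-/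

/-- A pair `(x, y)` of elements of a group `G` is a *symmetric generating pair* if it
generates `G` and some automorphism of `G` inverts both `x` and `y`.  A group `G` is
*strongly symmetric* if it can be generated by two elements and every generating pair
is symmetric. -/
def StronglySymmetric (G : Type*) [Group G] : Prop :=
  (∃ x y : G, Subgroup.closure {x, y} = ⊤) ∧
    ∀ x y : G, Subgroup.closure {x, y} = ⊤ →
      ∃ φ : MulAut G, φ x = x⁻¹ ∧ φ y = y⁻¹

open Matrix MatrixGroups Matrix.SpecialLinearGroup Projectivization
open scoped LinearAlgebra.Projectivization

theorem FiniteField.exists_sq_sub_sq {F : Type*} [Field F] [Finite F] (s : F) :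
    ∃ a b : F, a ^ 2 - b ^ 2 = s := by
  by_cases hF : ringChar F = 2
  · obtain ⟨a, ha⟩ := FiniteField.isSquare_of_char_two hF s
    exact ⟨a, 0, by rw [ha]; ring⟩
  · have h2 := Ring.two_ne_zero hF
    exact ⟨(s + 1) / 2, (s - 1) / 2, by field_simp; ring⟩

namespace AddSubgroup

variable {F : Type*} [Field F] [Finite F] {S : AddSubgroup F}

theorem eq_top_of_sq_mul_mem {c : F} (hc : c ∈ S) (hc0 : c ≠ 0)
    (hS : ∀ a, ∀ t ∈ S, a ^ 2 * t ∈ S) : S = ⊤ := by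
  refine eq_top_iff.mpr fun t _ ↦ ?_
  obtain ⟨a, b, hab⟩ := FiniteField.exists_sq_sub_sq (t / c)
  have ht : t = a ^ 2 * c - b ^ 2 * c := by rw [← sub_mul, hab, div_mul_cancel₀ _ hc0]
  exact ht ▸ sub_mem (hS a c hc) (hS b c hc)

theorem sq_mul_mem_of_generator {ν : Fˣ} (hν : ∀ u, u ∈ Subgroup.zpowers ν)
    (h : ∀ t ∈ S, (ν : F) ^ 2 * t ∈ S) (a : F) {t : F} (ht : t ∈ S) : a ^ 2 * t ∈ S := by
  rcases eq_or_ne a 0 with rfl | ha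
  · simp
  obtain ⟨k, hk⟩ := (Submonoid.mem_powers_iff _ _).mp
    (mem_powers_iff_mem_zpowers.mpr (hν (Units.mk0 a ha)))
  obtain rfl : (ν : F) ^ k = a := by rw [← Units.val_pow_eq_pow_val, hk, Units.val_mk0]
  clear hk ha
  rw [← pow_mul, mul_comm k, pow_mul]
  induction k with
  | zero => simpa using ht
  | succ k ih => rw [pow_succ', mul_assoc]; exact h _ ih

end AddSubgroup

theorem exists_mulAut_inv_of_commute {G : Type*} [Group G] {x y : G} (hxy : Commute x y)
    (h : Subgroup.closure {x, y} = ⊤) : ∃ φ : MulAut G, φ x = x⁻¹ ∧ φ y = y⁻¹ := by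
  have := Subgroup.isMulCommutative_closure (k := {x, y}) <| by
    rintro a (rfl | rfl) b (rfl | rfl)
    exacts [rfl, hxy.eq, hxy.eq.symm, rfl]
  have hcomm (a b : G) : a * b = b * a :=
    setLike_mul_comm (s := Subgroup.closure {x, y}) (h ▸ Subgroup.mem_top a)
      (h ▸ Subgroup.mem_top b)
  let _ : CommGroup G := { mul_comm := hcomm }
  exact ⟨MulEquiv.inv G, rfl, rfl⟩

namespace Matrix

variable {R K : Type*} [CommRing R] [Field K]

theorem lie_mul_left_eq_adjugate_mul_lie (A B : Matrix (Fin 2) (Fin 2) R) :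
    ⁅A, B⁆ * A = adjugate A * ⁅A, B⁆ := by
  rw [Ring.lie_def, adjugate_fin_two, eta_fin_two A, eta_fin_two B]
  ext i j
  fin_cases i <;> fin_cases j <;> simp [mul_apply, Fin.sum_univ_two] <;> ring

theorem lie_mul_right_eq_adjugate_mul_lie (A B : Matrix (Fin 2) (Fin 2) R) :
    ⁅A, B⁆ * B = adjugate B * ⁅A, B⁆ := by
  have h := lie_mul_left_eq_adjugate_mul_lie B A
  rw [Ring.lie_def] at h ⊢
  rw [← neg_sub, neg_mul, mul_neg, h]

theorem exists_smul_eq_of_mulVec_eq_zero {C : Matrix (Fin 2) (Fin 2) K} (hC : C ≠ 0)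
    {v w : Fin 2 → K} (hv : v ≠ 0) (hCv : C *ᵥ v = 0) (hCw : C *ᵥ w = 0) :
    ∃ a : K, a • v = w := by
  have hker : Module.finrank K (LinearMap.ker (toLin' C)) ≤ 1 := by
    have hrange : Module.finrank K (LinearMap.range (toLin' C)) ≠ 0 := by
      rw [Ne, Submodule.finrank_eq_zero, LinearMap.range_eq_bot]
      exact (map_ne_zero_iff _ toLin'.injective).mpr hC
    have := (toLin' C).finrank_range_add_finrank_ker
    simp only [Module.finrank_fin_fun] at this
    omega
  obtain ⟨u, hu⟩ := finrank_le_one_iff.mp hker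
  obtain ⟨a, ha⟩ := hu ⟨v, hCv⟩
  obtain ⟨b, hb⟩ := hu ⟨w, hCw⟩
  replace ha : a • (u : Fin 2 → K) = v := congrArg Subtype.val ha
  replace hb : b • (u : Fin 2 → K) = w := congrArg Subtype.val hb
  have ha0 : a ≠ 0 := by
    rintro rfl
    exact hv (by simpa using ha.symm)
  exact ⟨b / a, by rw [← ha, ← hb, smul_smul, div_mul_cancel₀ _ ha0]⟩

end Matrix

namespace Matrix.SpecialLinearGroup

variable {n R : Type*} [Fintype n] [DecidableEq n] [CommRing R]

def unitConj (P : (Matrix n n R)ˣ) : SpecialLinearGroup n R ≃* SpecialLinearGroup n R where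
  toFun A := ⟨P * A * ↑P⁻¹, by rw [det_units_conj, A.2]⟩
  invFun A := ⟨↑P⁻¹ * A * P, by rw [det_units_conj', A.2]⟩
  left_inv A := Subtype.ext <| by simp [mul_assoc]
  right_inv A := Subtype.ext <| by simp [mul_assoc]
  map_mul' A B := Subtype.ext <|
    show (P : Matrix n n R) * (A * B) * ↑P⁻¹ = (P * A * ↑P⁻¹) * (P * B * ↑P⁻¹) by
      simp [mul_assoc]

theorem coe_unitConj (P : (Matrix n n R)ˣ) (A : SpecialLinearGroup n R) :
    (unitConj P A : Matrix n n R) = P * A * (↑P⁻¹ : Matrix n n R) :=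
  rfl

theorem unitConj_eq_inv {P : (Matrix n n R)ˣ} {A : SpecialLinearGroup n R}
    (h : (P : Matrix n n R) * A = adjugate (A : Matrix n n R) * P) : unitConj P A = A⁻¹ :=
  Subtype.ext <| by rw [coe_unitConj, coe_inv, h, mul_assoc, Units.mul_inv, mul_one]

def transvectionCoeffs (H : Subgroup (SpecialLinearGroup n R)) {i j : n} (hij : i ≠ j) :
    AddSubgroup R where
  carrier := {b | transvection hij b ∈ H}
  zero_mem' := by simp [one_mem]
  add_mem' {a b} ha hb := show transvection hij (a + b) ∈ H by
    rw [transvection_add]; exact mul_mem ha hb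
  neg_mem' {b} hb := show transvection hij (-b) ∈ H by
    rw [← transvection_inv]; exact inv_mem hb

theorem mem_transvectionCoeffs {H : Subgroup (SpecialLinearGroup n R)} {i j : n} {hij : i ≠ j}
    {b : R} : b ∈ transvectionCoeffs H hij ↔ transvection hij b ∈ H :=
  Iff.rfl

end Matrix.SpecialLinearGroup

namespace Matrix.SL2

variable {R F : Type*} [CommRing R] [Field F]

theorem eq_top_of_transvectionCoeffs_eq_top {H : Subgroup SL(2, F)}
    (h₀₁ : transvectionCoeffs H zero_ne_one = ⊤)
    (h₁₀ : transvectionCoeffs H one_ne_zero = ⊤) : H = ⊤ := by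
  rw [AddSubgroup.eq_top_iff'] at h₀₁ h₁₀
  rw [Subgroup.eq_top_iff']
  refine SL2.transvection_induction (· ∈ H) (fun i j hij c ↦ ?_) (fun _ _ ↦ mul_mem)
  fin_cases i <;> fin_cases j
  exacts [absurd rfl hij, h₀₁ c, h₁₀ c, absurd rfl hij]

/-- The reduction of `ModularGroup.S * ModularGroup.T`. -/
def ST : SL(2, R) :=
  ⟨!![0, -1; 1, 1], by simp [det_fin_two]⟩

theorem coe_ST : ((ST : SL(2, R)) : Matrix (Fin 2) (Fin 2) R) = !![0, -1; 1, 1] :=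
  rfl

theorem ST_mul_transvection_mul_inv (b : R) :
    ST * SpecialLinearGroup.transvection zero_ne_one b * ST⁻¹ =
      SpecialLinearGroup.transvection one_ne_zero (-b) := by
  refine Subtype.ext ?_
  simp only [SpecialLinearGroup.coe_mul, SpecialLinearGroup.coe_inv, coe_ST, transvection_coe]
  ext i j
  fin_cases i <;> fin_cases j <;>
    simp [adjugate_fin_two, mul_apply, vecMul, dotProduct, Fin.sum_univ_two, one_apply,
      single_apply]

theorem ST_inv_mul_diag2_inv_mul_ST_mul_diag2_inv (a : F) (ha : a ≠ 0) :
    ST⁻¹ * (diag2 a ha)⁻¹ * ST * (diag2 a ha)⁻¹ =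
      SpecialLinearGroup.transvection zero_ne_one (a ^ 2 - 1) := by
  refine Subtype.ext ?_
  simp only [diag2_inv, SpecialLinearGroup.coe_mul, SpecialLinearGroup.coe_inv, coe_ST,
    diag2_coe', transvection_coe]
  ext i j
  fin_cases i <;> fin_cases j <;>
    simp [ha, adjugate_fin_two, mul_apply, Fin.sum_univ_two, add_mul, sq, sub_eq_neg_add]

theorem diag2_mul_transvection_mul_inv (a : F) (ha : a ≠ 0) (b : F) :
    diag2 a ha * SpecialLinearGroup.transvection zero_ne_one b * (diag2 a ha)⁻¹ =
      SpecialLinearGroup.transvection zero_ne_one (a ^ 2 * b) := by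
  rw [show a ^ 2 * b = b * (a ^ 2 - 1) + b by ring, transvection_add,
    ← commutator_diag2_transvection a ha b _ rfl, commutatorElement_def, inv_mul_cancel_right]

theorem exists_closure_pair_eq_top [Finite F] :
    ∃ X Y : SL(2, F), Subgroup.closure {X, Y} = ⊤ := by
  obtain ⟨ν, hν⟩ := IsCyclic.exists_generator (α := Fˣ)
  by_cases hν2 : (ν : F) ^ 2 = 1
  · have h_one {i j : Fin 2} (hij : i ≠ j) {H : Subgroup SL(2, F)}
        (h : SpecialLinearGroup.transvection hij 1 ∈ H) : transvectionCoeffs H hij = ⊤ :=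
      AddSubgroup.eq_top_of_sq_mul_mem h one_ne_zero
        (AddSubgroup.sq_mul_mem_of_generator hν fun t ht ↦ by rwa [hν2, one_mul])
    exact ⟨_, _, eq_top_of_transvectionCoeffs_eq_top
      (h_one _ (Subgroup.subset_closure (Set.mem_insert _ _)))
      (h_one _ (Subgroup.subset_closure (Set.mem_insert_of_mem _ rfl)))⟩
  set D := diag2 (ν : F) ν.ne_zero
  refine ⟨D, ST, ?_⟩
  set H := Subgroup.closure {D, ST}
  have hD : D ∈ H := Subgroup.subset_closure (Set.mem_insert _ _)
  have hST : ST ∈ H := Subgroup.subset_closure (Set.mem_insert_of_mem _ rfl)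
  have h₀₁ : transvectionCoeffs H zero_ne_one = ⊤ := by
    refine AddSubgroup.eq_top_of_sq_mul_mem (c := (ν : F) ^ 2 - 1) ?_ (sub_ne_zero.mpr hν2)
      (AddSubgroup.sq_mul_mem_of_generator hν fun t ht ↦ ?_)
    · rw [mem_transvectionCoeffs, ← ST_inv_mul_diag2_inv_mul_ST_mul_diag2_inv _ ν.ne_zero]
      exact mul_mem (mul_mem (mul_mem (inv_mem hST) (inv_mem hD)) hST) (inv_mem hD)
    · rw [mem_transvectionCoeffs, ← diag2_mul_transvection_mul_inv _ ν.ne_zero]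
      exact mul_mem (mul_mem hD ht) (inv_mem hD)
  refine eq_top_of_transvectionCoeffs_eq_top h₀₁ (eq_top_iff.mpr fun t _ ↦ ?_)
  rw [mem_transvectionCoeffs, ← neg_neg t, ← ST_mul_transvection_mul_inv]
  exact mul_mem (mul_mem hST (mem_transvectionCoeffs.mp (h₀₁ ▸ AddSubgroup.mem_top _)))
    (inv_mem hST)

end Matrix.SL2

namespace Matrix.ProjectiveSpecialLinearGroup

variable {n R K : Type*} [Fintype n] [DecidableEq n] [CommRing R] [Field K]

def unitConj (P : (Matrix n n R)ˣ) : MulAut (ProjectiveSpecialLinearGroup n R) :=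
  QuotientGroup.congr _ _ (SpecialLinearGroup.unitConj P)
    (Subgroup.characteristic_iff_map_eq.mp inferInstance _)

theorem unitConj_coe (P : (Matrix n n R)ˣ) (A : SpecialLinearGroup n R) :
    unitConj P (A : ProjectiveSpecialLinearGroup n R) = SpecialLinearGroup.unitConj P A :=
  rfl

theorem exists_mulAut_inv_of_isUnit_det_lie (X Y : SL(2, R)) (h : IsUnit (det ⁅X.1, Y.1⁆)) :
    ∃ φ : MulAut PSL(2, R), φ X = (X : PSL(2, R))⁻¹ ∧ φ Y = (Y : PSL(2, R))⁻¹ := by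
  obtain ⟨P, hP⟩ := (isUnit_iff_isUnit_det _).mpr h
  have hX : (P : Matrix (Fin 2) (Fin 2) R) * X = adjugate X.1 * P :=
    hP ▸ lie_mul_left_eq_adjugate_mul_lie _ _
  have hY : (P : Matrix (Fin 2) (Fin 2) R) * Y = adjugate Y.1 * P :=
    hP ▸ lie_mul_right_eq_adjugate_mul_lie _ _
  exact ⟨unitConj P,
    by rw [unitConj_coe, SpecialLinearGroup.unitConj_eq_inv hX, QuotientGroup.mk_inv],
    by rw [unitConj_coe, SpecialLinearGroup.unitConj_eq_inv hY, QuotientGroup.mk_inv]⟩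

theorem smul_mk_eq_self {C : Matrix (Fin 2) (Fin 2) K} (hC : C ≠ 0) {v : Fin 2 → K}
    (hv : v ≠ 0) (hCv : C *ᵥ v = 0) {A : SL(2, K)}
    (hA : C * A = adjugate (A : Matrix (Fin 2) (Fin 2) K) * C) :
    (A : PSL(2, K)) • mk K v hv = mk K v hv := by
  rw [smul_proj_mk, smul_mk, mk_eq_mk_iff']
  refine exists_smul_eq_of_mulVec_eq_zero hC hv hCv ?_
  rw [SpecialLinearGroup.smul_def, smul_eq_mulVec, mulVec_mulVec, hA, ← mulVec_mulVec, hCv,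
    mulVec_zero]

theorem stabilizer_ne_top (p : ℙ K (Fin 2 → K)) : MulAction.stabilizer PSL(2, K) p ≠ ⊤ := by
  have : Nontrivial (ℙ K (Fin 2 → K)) := by
    refine ⟨⟨mk K (Pi.single 0 1) (by simp), mk K (Pi.single 1 1) (by simp), ?_⟩⟩
    rw [Ne, mk_eq_mk_iff']
    rintro ⟨a, ha⟩
    simpa using congrFun ha 0
  intro h
  obtain ⟨q, hq⟩ := exists_ne p
  obtain ⟨g, rfl⟩ := MulAction.exists_smul_eq PSL(2, K) p q
  exact hq (MulAction.mem_stabilizer_iff.mp (h ▸ Subgroup.mem_top g))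

theorem closure_pair_ne_top_of_det_lie_eq_zero (X Y : SL(2, K)) (hdet : det ⁅X.1, Y.1⁆ = 0)
    (hC : ⁅X.1, Y.1⁆ ≠ 0) : Subgroup.closure {(X : PSL(2, K)), (Y : PSL(2, K))} ≠ ⊤ := by
  obtain ⟨v, hv, hCv⟩ := exists_mulVec_eq_zero_iff.mpr hdet
  intro h
  refine stabilizer_ne_top (mk K v hv) (eq_top_iff.mpr (h ▸ (Subgroup.closure_le _).mpr ?_))
  rintro _ (rfl | rfl)
  · exact smul_mk_eq_self hC hv hCv (lie_mul_left_eq_adjugate_mul_lie _ _)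
  · exact smul_mk_eq_self hC hv hCv (lie_mul_right_eq_adjugate_mul_lie _ _)

theorem exists_mulAut_inv_of_closure_eq_top {x y : PSL(2, K)}
    (h : Subgroup.closure {x, y} = ⊤) : ∃ φ : MulAut PSL(2, K), φ x = x⁻¹ ∧ φ y = y⁻¹ := by
  obtain ⟨X, rfl⟩ := QuotientGroup.mk_surjective x
  obtain ⟨Y, rfl⟩ := QuotientGroup.mk_surjective y
  by_cases hdet : det ⁅X.1, Y.1⁆ = 0
  · by_cases hC : ⁅X.1, Y.1⁆ = 0
    · refine exists_mulAut_inv_of_commute ?_ h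
      have hXY : X * Y = Y * X := Subtype.ext (sub_eq_zero.mp (by rwa [Ring.lie_def] at hC))
      exact congrArg QuotientGroup.mk hXY
    · exact absurd h (closure_pair_ne_top_of_det_lie_eq_zero X Y hdet hC)
  · exact exists_mulAut_inv_of_isUnit_det_lie X Y (Ne.isUnit hdet)

theorem exists_closure_pair_eq_top [Finite K] :
    ∃ x y : PSL(2, K), Subgroup.closure {x, y} = ⊤ := by
  obtain ⟨X, Y, h⟩ := SL2.exists_closure_pair_eq_top (F := K)
  refine ⟨X, Y, ?_⟩
  have hmap := congrArg (Subgroup.map (QuotientGroup.mk' (Subgroup.center SL(2, K)))) h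
  rwa [MonoidHom.map_closure, Set.image_pair,
    Subgroup.map_top_of_surjective _ (QuotientGroup.mk'_surjective _)] at hmap

end Matrix.ProjectiveSpecialLinearGroup

theorem psl_two_strongly_symmetric_general
    (F : Type*) [Field F] [Fintype F] :
    StronglySymmetric (Matrix.ProjectiveSpecialLinearGroup (Fin 2) F) :=
  ⟨ProjectiveSpecialLinearGroup.exists_closure_pair_eq_top,
    fun _ _ ↦ ProjectiveSpecialLinearGroup.exists_mulAut_inv_of_closure_eq_top⟩

/-- For every prime power `q`, the group `PSL(2, q)` is strongly symmetric. -/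
theorem psl_two_strongly_symmetric
    (q : ℕ) (hq : IsPrimePow q)
    (F : Type*) [Field F] [Fintype F] (hF : Fintype.card F = q) :
    StronglySymmetric (Matrix.ProjectiveSpecialLinearGroup (Fin 2) F) :=
  psl_two_strongly_symmetric_general F
end

section
/- Let n ≥ 3 be an integer, let q be a prime power, let g ∈ GL(n, F_q) have multiplicative order q^n − 1, and set x := g^{gcd(n, q−1)}. If a ∈ GL(n, F_q), z is a nonzero scalar in F_q, ε ∈ {−1, 1}, and a⁻¹ · x · a = z · x^ε (as matrices, where z·x^ε denotes the scalar multiple of the matrix x^ε), then z = 1, ε = 1, and a belongs to the cyclic subgroup generated by g. -/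
-- gcd of Mersenne-type numbers divides Mersenne of gcd
lemma gcd_pow_sub_one_dvd (q n i : ℕ) (hq : 2 ≤ q) (hn : 1 ≤ n) (hi : 1 ≤ i) :
    Nat.gcd (q ^ n - 1) (q ^ i - 1) ∣ q ^ Nat.gcd n i - 1 := by
  set G := Nat.gcd (q ^ n - 1) (q ^ i - 1) with hG
  have h1 : G ∣ q ^ n - 1 := Nat.gcd_dvd_left _ _
  have h2 : G ∣ q ^ i - 1 := Nat.gcd_dvd_right _ _
  have hqn : 1 ≤ q ^ n := Nat.one_le_pow _ _ (by omega)
  have hqi : 1 ≤ q ^ i := Nat.one_le_pow _ _ (by omega)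
  have e1 : ((q : ZMod G)) ^ n = 1 := by
    have : (1 : ℕ) ≡ q ^ n [MOD G] := (Nat.modEq_iff_dvd' hqn).2 h1
    have := (ZMod.natCast_eq_natCast_iff _ _ _).2 this
    push_cast at this
    exact this.symm
  have e2 : ((q : ZMod G)) ^ i = 1 := by
    have : (1 : ℕ) ≡ q ^ i [MOD G] := (Nat.modEq_iff_dvd' hqi).2 h2
    have := (ZMod.natCast_eq_natCast_iff _ _ _).2 this
    push_cast at this
    exact this.symm
  have hdvd : orderOf ((q : ZMod G)) ∣ Nat.gcd n i :=
    Nat.dvd_gcd (orderOf_dvd_of_pow_eq_one e1) (orderOf_dvd_of_pow_eq_one e2)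
  have e3 : ((q : ZMod G)) ^ Nat.gcd n i = 1 := orderOf_dvd_iff_pow_eq_one.1 hdvd
  have hqg : 1 ≤ q ^ Nat.gcd n i := Nat.one_le_pow _ _ (by omega)
  have : ((1:ℕ) : ZMod G) = ((q ^ Nat.gcd n i : ℕ) : ZMod G) := by push_cast; exact e3.symm
  have := (ZMod.natCast_eq_natCast_iff _ _ _).1 this
  exact (Nat.modEq_iff_dvd' hqg).1 this

-- basic size fact
lemma nt_size (q n d k : ℕ) (hq : 2 ≤ q) (hn : 3 ≤ n) (hd : d ∣ q - 1) (hd0 : 0 < d)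
    (hk1 : 1 ≤ k) (hk : k ≤ n - 1) : ¬ (q ^ n - 1 ∣ d * (q ^ k - 1)) := by
  intro h
  have hdle : d ≤ q - 1 := Nat.le_of_dvd (by omega) hd
  have hqk : q ^ k ≤ q ^ (n-1) := Nat.pow_le_pow_right (by omega) hk
  have hq1 : 2 ≤ q ^ k := le_trans hq (Nat.le_self_pow (by omega) q)
  have hpos : 0 < d * (q ^ k - 1) := Nat.mul_pos hd0 (by omega)
  have hle : q ^ n - 1 ≤ d * (q ^ k - 1) := Nat.le_of_dvd hpos h
  have hqn : q ^ n = q * q ^ (n-1) := by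
    conv_lhs => rw [show n = 1 + (n-1) by omega, pow_add, pow_one]
  have h2 : d * (q ^ k - 1) ≤ (q - 1) * (q ^ (n-1) - 1) :=
    Nat.mul_le_mul hdle (by omega)
  have hq2 : 2 ≤ q ^ (n-1) := le_trans hq (Nat.le_self_pow (by omega) q)
  have hexp : (q - 1) * (q ^ (n-1) - 1) < q ^ n - 1 := by
    zify [show 1 ≤ q by omega, show 1 ≤ q ^ (n-1) by omega,
      show 1 ≤ q ^ n by nlinarith]
    have h : (q:ℤ) ^ n = q * q ^ (n-1) := by exact_mod_cast hqn
    nlinarith [h, (show (2:ℤ) ≤ q by exact_mod_cast hq),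
      (show (2:ℤ) ≤ q ^ (n-1) by exact_mod_cast hq2)]
  omega


lemma nt_size2 (q n d m : ℕ) (hq : 2 ≤ q) (hn : 3 ≤ n) (hdle : d ≤ q - 1) (hm : m ≤ n - 1)
    (h : q ^ n - 1 ≤ d * (q ^ m - 1)) : False := by
  have hqk : q ^ m ≤ q ^ (n-1) := Nat.pow_le_pow_right (by omega) hm
  have hqn : q ^ n = q * q ^ (n-1) := by
    conv_lhs => rw [show n = 1 + (n-1) by omega, pow_add, pow_one]
  have h2 : d * (q ^ m - 1) ≤ (q - 1) * (q ^ (n-1) - 1) :=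
    Nat.mul_le_mul hdle (by omega)
  have hq2 : 2 ≤ q ^ (n-1) := le_trans hq (Nat.le_self_pow (by omega) q)
  have hqn2 : 2 ≤ q ^ n := le_trans hq (Nat.le_self_pow (by omega) q)
  have hexp : (q - 1) * (q ^ (n-1) - 1) < q ^ n - 1 := by
    zify [show 1 ≤ q by omega, show 1 ≤ q ^ (n-1) by omega,
      show 1 ≤ q ^ n by omega]
    have hh : (q:ℤ) ^ n = q * q ^ (n-1) := by exact_mod_cast hqn
    nlinarith [hh, (show (2:ℤ) ≤ q by exact_mod_cast hq),
      (show (2:ℤ) ≤ (q:ℤ) ^ (n-1) by exact_mod_cast hq2)]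
  omega

lemma nt_core (q n d j A C : ℕ) (hq : 2 ≤ q) (hn : 3 ≤ n) (hd : d ∣ q - 1) (hd0 : 0 < d)
    (hA : A = q ^ n - 1) (hg : Nat.gcd A C ∣ q ^ j - 1) (hj1 : 1 ≤ j) (hjn : j + 2 ≤ n)
    (hC : 0 < C) (h : A ∣ d * (q - 1) * C) : False := by
  set g := Nat.gcd A C with hgdef
  have hA0 : 0 < A := by
    have : 2 ≤ q ^ n := le_trans hq (Nat.le_self_pow (by omega) q)
    omega
  have hg0 : 0 < g := Nat.gcd_pos_of_pos_left _ hA0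
  have hgA : g ∣ A := Nat.gcd_dvd_left _ _
  have hgC : g ∣ C := Nat.gcd_dvd_right _ _
  obtain ⟨A', hA'⟩ := hgA
  obtain ⟨C', hC'⟩ := hgC
  have hcop : Nat.Coprime A' C' := by
    have h0 : 0 < Nat.gcd A C := by rw [← hgdef]; exact hg0
    have hA'' : A' = A / g := by rw [hA', Nat.mul_div_cancel_left _ hg0]
    have hC'' : C' = C / g := by rw [hC', Nat.mul_div_cancel_left _ hg0]
    rw [hA'', hC'', hgdef]
    exact Nat.coprime_div_gcd_div_gcd h0
  have hstep : A' ∣ d * (q - 1) * C' := by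
    have h2 : g * A' ∣ g * (d * (q - 1) * C') := by
      rw [← hA']
      calc A ∣ d * (q - 1) * C := h
        _ = g * (d * (q - 1) * C') := by rw [hC']; ring
    exact (Nat.mul_dvd_mul_iff_left hg0).1 h2
  have hA'dvd : A' ∣ d * (q - 1) := hcop.dvd_of_dvd_mul_right hstep
  have hq1 : 0 < q - 1 := by omega
  have hA'le : A' ≤ d * (q - 1) := Nat.le_of_dvd (Nat.mul_pos hd0 hq1) hA'dvd
  have hdle : d ≤ q - 1 := Nat.le_of_dvd hq1 hd
  have hgle : g ≤ q ^ j - 1 := Nat.le_of_dvd (by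
    have : 2 ≤ q ^ j := le_trans hq (Nat.le_self_pow (by omega) q); omega) hg
  have hAle : A ≤ (q ^ j - 1) * ((q - 1) * (q - 1)) := by
    rw [hA']
    exact Nat.mul_le_mul hgle (le_trans hA'le (Nat.mul_le_mul_right _ hdle))
  -- size contradiction
  have hqj2 : 2 ≤ q ^ j := le_trans hq (Nat.le_self_pow (by omega) q)
  have hqn2 : 2 ≤ q ^ n := le_trans hq (Nat.le_self_pow (by omega) q)
  have hpow : q ^ j * (q * q) ≤ q ^ n := by
    calc q ^ j * (q * q) = q ^ (j + 2) := by ring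
      _ ≤ q ^ n := Nat.pow_le_pow_right (by omega) hjn
  rw [hA] at hAle
  have hcon : (q ^ j - 1) * ((q - 1) * (q - 1)) < q ^ n - 1 := by
    zify [show 1 ≤ q by omega, show 1 ≤ q ^ j by omega, show 1 ≤ q ^ n by omega]
    have hZpow : ((q:ℤ) ^ j) * (q * q) ≤ (q:ℤ) ^ n := by exact_mod_cast hpow
    nlinarith [hZpow, (show (2:ℤ) ≤ q by exact_mod_cast hq),
      (show (2:ℤ) ≤ (q:ℤ) ^ j by exact_mod_cast hqj2)]
  omega

lemma proper_divisor_le (j n : ℕ) (h : j ∣ n) (hne : j ≠ n) (hn : 0 < n) : 2 * j ≤ n := by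
  obtain ⟨t, rfl⟩ := h
  have h1 : t ≠ 1 := by rintro rfl; simp at hne
  have h0 : t ≠ 0 := by rintro rfl; omega
  calc 2 * j = j * 2 := by ring
    _ ≤ j * t := Nat.mul_le_mul_left j (by omega)

lemma nt_a (q n d i : ℕ) (hq : 2 ≤ q) (hn : 3 ≤ n) (hd : d ∣ q - 1) (hd0 : 0 < d)
    (hi1 : 1 ≤ i) (hi : i ≤ n - 1) :
    ¬ (q ^ n - 1 ∣ d * (q - 1) * (q ^ i - 1)) := by
  intro h
  set j := Nat.gcd n i with hj
  have hj1 : 1 ≤ j := Nat.gcd_pos_of_pos_left _ (by omega)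
  have hjd : j ∣ n := Nat.gcd_dvd_left _ _
  have hjne : j ≠ n := by
    intro hh
    have : j ≤ i := Nat.le_of_dvd (by omega) (Nat.gcd_dvd_right _ _)
    omega
  have h2j : 2 * j ≤ n := proper_divisor_le j n hjd hjne (by omega)
  refine nt_core q n d j (q ^ n - 1) (q ^ i - 1) hq hn hd hd0 rfl ?_ hj1 (by omega) ?_ h
  · exact gcd_pow_sub_one_dvd q n i hq (by omega) hi1
  · have : 2 ≤ q ^ i := le_trans hq (Nat.le_self_pow (by omega) q); omega

lemma nt_b (q n d i : ℕ) (hq : 2 ≤ q) (hn : 3 ≤ n) (hd : d ∣ q - 1) (hd0 : 0 < d)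
    (hi : i ≤ n - 1) :
    ¬ (q ^ n - 1 ∣ d * (q - 1) * (q ^ i + 1)) := by
  intro h
  have hqn2 : 2 ≤ q ^ n := le_trans hq (Nat.le_self_pow (by omega) q)
  have hq3 : q * (q * q) ≤ q ^ n := by
    calc q * (q * q) = q ^ 3 := by ring
      _ ≤ q ^ n := Nat.pow_le_pow_right (by omega) hn
  rcases Nat.eq_zero_or_pos i with rfl | hi1
  · -- i = 0 : q^n - 1 ∣ d (q-1) * 2
    have hle : q ^ n - 1 ≤ d * (q - 1) * 2 := Nat.le_of_dvd
      (Nat.mul_pos (Nat.mul_pos hd0 (by omega)) two_pos) (by simpa using h)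
    have hdle : d ≤ q - 1 := Nat.le_of_dvd (by omega) hd
    have : q ^ n - 1 ≤ (q - 1) * (q - 1) * 2 := le_trans hle (by
      exact Nat.mul_le_mul_right _ (Nat.mul_le_mul_right _ hdle))
    zify [show 1 ≤ q by omega, show 1 ≤ q ^ n by omega] at this
    have hZ3 : (q:ℤ) * (q * q) ≤ (q:ℤ) ^ n := by exact_mod_cast hq3
    nlinarith [hZ3, (show (2:ℤ) ≤ q by exact_mod_cast hq)]
  · have h2qi : 2 ≤ q ^ i := le_trans hq (Nat.le_self_pow (by omega) q)
    have hfac : q ^ (2 * i) - 1 = (q ^ i - 1) * (q ^ i + 1) := by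
      have hqq : q ^ (2 * i) = q ^ i * q ^ i := by rw [two_mul, pow_add]
      rw [hqq]
      zify [show 1 ≤ q ^ i by omega, show 1 ≤ q ^ i * q ^ i by nlinarith]
      ring
    by_cases hdvd : n ∣ 2 * i
    · -- then n = 2 i
      obtain ⟨t, ht⟩ := hdvd
      have hn2i : n = 2 * i := by
        rcases t with _ | _ | t
        · omega
        · omega
        · exfalso
          have hge : n * 2 ≤ n * (t + 1 + 1) := Nat.mul_le_mul_left n (by omega)
          have h' : n * 2 ≤ 2 * i := ht ▸ hge
          omega
      have h2 : (q ^ i - 1) * (q ^ i + 1) ∣ (d * (q - 1)) * (q ^ i + 1) := by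
        rw [← hfac, ← hn2i]; exact h
      have h3 : q ^ i - 1 ∣ d * (q - 1) :=
        (Nat.mul_dvd_mul_iff_right (show 0 < q ^ i + 1 by positivity)).1 h2
      have hi2 : 2 ≤ i := by omega
      have hdle : d ≤ q - 1 := Nat.le_of_dvd (by omega) hd
      have hle : q ^ i - 1 ≤ (q - 1) * (q - 1) := le_trans
        (Nat.le_of_dvd (Nat.mul_pos hd0 (by omega)) h3)
        (Nat.mul_le_mul_right _ hdle)
      have hqi : q * q ≤ q ^ i := by
        calc q * q = q ^ 2 := by ring
          _ ≤ q ^ i := Nat.pow_le_pow_right (by omega) hi2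
      zify [show 1 ≤ q ^ i by nlinarith, show 1 ≤ q by omega] at hle
      have hZ : (q:ℤ) * q ≤ (q:ℤ) ^ i := by exact_mod_cast hqi
      nlinarith [hZ, (show (2:ℤ) ≤ q by exact_mod_cast hq)]
    · set j := Nat.gcd n (2 * i) with hj
      have hj1 : 1 ≤ j := Nat.gcd_pos_of_pos_left _ (by omega)
      have hjd : j ∣ n := Nat.gcd_dvd_left _ _
      have hjne : j ≠ n := by
        intro hh
        exact hdvd (hh ▸ Nat.gcd_dvd_right n (2 * i))
      have h2j : 2 * j ≤ n := proper_divisor_le j n hjd hjne (by omega)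
      refine nt_core q n d j (q ^ n - 1) (q ^ i + 1) hq hn hd hd0 rfl ?_ hj1 (by omega)
        (by positivity) h
      have hCd : q ^ i + 1 ∣ q ^ (2 * i) - 1 := by rw [hfac]; exact Dvd.intro_left _ rfl
      have hstep : Nat.gcd (q ^ n - 1) (q ^ i + 1) ∣ Nat.gcd (q ^ n - 1) (q ^ (2*i) - 1) :=
        Nat.dvd_gcd (Nat.gcd_dvd_left _ _) ((Nat.gcd_dvd_right _ _).trans hCd)
      exact hstep.trans (gcd_pow_sub_one_dvd q n (2*i) hq (by omega) (by omega))
section Aux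
variable {R A : Type*} [CommSemiring R] [Ring A] [Algebra R A]

/-- Conjugation by a unit, as an algebra homomorphism. -/
def conjAlgHom (a : Aˣ) : A →ₐ[R] A where
  toFun m := ↑a⁻¹ * m * ↑a
  map_one' := by simp
  map_mul' m m' := by
    have : (m * (1:A) * m' : A) = m * m' := by simp
    calc (↑a⁻¹ * (m * m') * ↑a : A)
        = (↑a⁻¹ * m * (↑a * ↑a⁻¹) * m' * ↑a : A) := by
          rw [Units.mul_inv]; noncomm_ring
      _ = (↑a⁻¹ * m * ↑a) * (↑a⁻¹ * m' * ↑a) := by noncomm_ring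
  map_zero' := by simp
  map_add' m m' := by simp [mul_add, add_mul]
  commutes' r := by
    have h := Algebra.commutes r ((a : A))
    calc (↑a⁻¹ * algebraMap R A r * ↑a : A)
        = ↑a⁻¹ * (algebraMap R A r * ↑a) := by rw [mul_assoc]
      _ = ↑a⁻¹ * (↑a * algebraMap R A r) := by rw [← h]
      _ = algebraMap R A r := by rw [← mul_assoc, Units.inv_mul, one_mul]

@[simp] lemma conjAlgHom_apply (a : Aˣ) (m : A) : conjAlgHom (R := R) a m = ↑a⁻¹ * m * ↑a := rfl

/-- A unit of the ambient algebra whose value and inverse lie in a subalgebra gives a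
unit of the subalgebra mapping to it. -/
noncomputable def subUnit (S : Subalgebra R A) (w : Aˣ) (h1 : (w : A) ∈ S)
    (h2 : ((w⁻¹ : Aˣ) : A) ∈ S) : Sˣ where
  val := ⟨(w : A), h1⟩
  inv := ⟨((w⁻¹ : Aˣ) : A), h2⟩
  val_inv := by ext; simp
  inv_val := by ext; simp

@[simp] lemma subUnit_val (S : Subalgebra R A) (w : Aˣ) (h1) (h2) :
    ((subUnit S w h1 h2 : Sˣ) : S) = ⟨(w : A), h1⟩ := rfl

lemma subUnit_map (S : Subalgebra R A) (w : Aˣ) (h1) (h2) :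
    Units.map (S.val.toRingHom.toMonoidHom) (subUnit S w h1 h2) = w := by
  ext; rfl

end Aux

open scoped MatrixGroups

set_option maxHeartbeats 1000000 in
set_option synthInstance.maxHeartbeats 400000 in
/-- Let `n ≥ 3`, let `q` be a prime power, let `g ∈ GL(n, F_q)` have order `q ^ n - 1`
(a Singer cycle) and set `x := g ^ gcd n (q - 1)`.  If `a ∈ GL(n, F_q)`, `z` is a
nonzero scalar and `ε ∈ {-1, 1}` satisfy `a⁻¹ * x * a = z • x ^ ε` (as matrices), then
`z = 1`, `ε = 1` and `a` lies in the cyclic subgroup generated by `g`. -/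
theorem singer_cycle_linear_normalizer
    (n q : ℕ) (hn : 3 ≤ n) (hq : IsPrimePow q)
    (F : Type*) [Field F] [Fintype F] (hF : Fintype.card F = q)
    (g : GL (Fin n) F) (hg : orderOf g = q ^ n - 1)
    (x : GL (Fin n) F) (hx : x = g ^ Nat.gcd n (q - 1))
    (a : GL (Fin n) F) (z : F) (hz : z ≠ 0) (ε : ℤ) (hε : ε = 1 ∨ ε = -1)
    (hconj : ((a⁻¹ : GL (Fin n) F) : Matrix (Fin n) (Fin n) F) *
        (x : Matrix (Fin n) (Fin n) F) * (a : Matrix (Fin n) (Fin n) F) =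
        z • ((x ^ ε : GL (Fin n) F) : Matrix (Fin n) (Fin n) F)) :
    z = 1 ∧ ε = 1 ∧ a ∈ Subgroup.zpowers g := by
  classical
  have hq2 : 2 ≤ q := hF ▸ Fintype.one_lt_card
  have hn0 : 0 < n := by omega
  haveI : NeZero n := ⟨by omega⟩
  set d := Nat.gcd n (q - 1) with hd
  have hdq : d ∣ q - 1 := Nat.gcd_dvd_right _ _
  have hd0 : 0 < d := Nat.gcd_pos_of_pos_left _ (by omega)
  have hqn2 : 2 ≤ q ^ n := le_trans hq2 (Nat.le_self_pow (by omega) q)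
  have hordg : 0 < orderOf g := by rw [hg]; omega
  -- the commutative subalgebra K = F[g]
  set u : Matrix (Fin n) (Fin n) F := (g : Matrix (Fin n) (Fin n) F) with hu
  set K : Subalgebra F (Matrix (Fin n) (Fin n) F) := Algebra.adjoin F {u} with hK
  letI instKcomm : CommRing ↥K := Algebra.adjoinCommRingOfComm F (by
    rintro a rfl b rfl; rfl)
  have huK : u ∈ K := Algebra.subset_adjoin rfl
  set u' : ↥K := ⟨u, huK⟩ with hu'
  have huint : IsIntegral F u :=
    ⟨Matrix.charpoly u, Matrix.charpoly_monic u, by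
      simpa [Polynomial.aeval_def] using u.aeval_self_charpoly⟩
  have hvalinj : Function.Injective (K.val) := Subtype.coe_injective
  have hminpoly_eq : minpoly F u' = minpoly F u := (minpoly.algHom_eq K.val hvalinj u').symm
  have hu'int : IsIntegral F u' := by
    rw [show u' = ⟨u, huK⟩ from rfl]
    exact (isIntegral_algHom_iff K.val hvalinj).1 (by exact huint)
  have hdeg_le : (minpoly F u).natDegree ≤ n := by
    have hdvd : minpoly F u ∣ Matrix.charpoly u := minpoly.dvd F u (by
      simpa [Polynomial.aeval_def] using u.aeval_self_charpoly)
    have := Polynomial.natDegree_le_of_dvd hdvd (Matrix.charpoly_monic u).ne_zero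
    simpa [Matrix.charpoly_natDegree_eq_dim] using this
  -- adjoin of u' is everything
  have hadj_top : Algebra.adjoin F {u'} = (⊤ : Subalgebra F ↥K) := by
    apply Subalgebra.map_injective (f := K.val) hvalinj
    rw [AlgHom.map_adjoin]
    simp only [Set.image_singleton]
    rw [Algebra.map_top, Subalgebra.range_val]
    show Algebra.adjoin F {u} = K
    rfl
  -- finrank of K
  have hfinK : Module.finrank F ↥K = (minpoly F u).natDegree := by
    let pb := Algebra.adjoin.powerBasis (K := F) (S := ↥K) hu'int
    let e : ↥(Algebra.adjoin F {u'}) ≃ₐ[F] ↥K :=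
      (Subalgebra.equivOfEq _ _ hadj_top).trans Subalgebra.topEquiv
    have h1 : Module.finrank F ↥K = (minpoly F u').natDegree := (pb.map e).finrank
    rw [← hminpoly_eq]
    exact h1
  -- g as a unit of K
  have hginv_eq : (g⁻¹ : GL (Fin n) F) = g ^ (orderOf g - 1) := by
    have h1 : g * g ^ (orderOf g - 1) = 1 := by
      rw [← pow_succ']
      rw [show orderOf g - 1 + 1 = orderOf g by omega]
      exact pow_orderOf_eq_one g
    exact inv_eq_of_mul_eq_one_right h1
  have hginvK : ((g⁻¹ : GL (Fin n) F) : Matrix (Fin n) (Fin n) F) ∈ K := by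
    rw [hginv_eq, Units.val_pow_eq_pow_val]
    exact pow_mem huK _
  set ghat : (↥K)ˣ := subUnit K g huK hginvK with hghat
  have hmap_ghat : Units.map (K.val.toRingHom.toMonoidHom) ghat = g := subUnit_map _ _ _ _
  have hmapinj : Function.Injective (Units.map (K.val.toRingHom.toMonoidHom)) :=
    Units.map_injective hvalinj
  have hord_ghat : orderOf ghat = q ^ n - 1 := by
    rw [← hg, ← hmap_ghat]
    exact (orderOf_injective _ hmapinj ghat).symm
  -- cardinalities
  haveI : Fintype ↥K := Fintype.ofFinite _
  haveI : Fintype (↥K)ˣ := Fintype.ofFinite _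
  haveI hKnontriv : Nontrivial ↥K := ⟨1, 0, fun h => by
    have := congrArg (K.val) h
    simp at this⟩
  have hcardK : Fintype.card ↥K = q ^ Module.finrank F ↥K := by
    rw [← hF]; exact Module.card_eq_pow_finrank
  have hunits_inj : Function.Injective
      (fun w : (↥K)ˣ => (⟨(w : ↥K), w.ne_zero⟩ : {k : ↥K // k ≠ 0})) := by
    intro w₁ w₂ h
    exact Units.ext (congrArg Subtype.val h)
  have hcard_ne : Fintype.card {k : ↥K // k ≠ 0} = Fintype.card ↥K - 1 := by
    rw [Fintype.card_subtype_compl, Fintype.card_subtype_eq]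
  have hcard_units_le : Fintype.card (↥K)ˣ ≤ Fintype.card ↥K - 1 := by
    rw [← hcard_ne]; exact Fintype.card_le_of_injective _ hunits_inj
  have hord_le : q ^ n - 1 ≤ Fintype.card (↥K)ˣ := hord_ghat ▸ orderOf_le_card_univ
  -- finrank = n
  have hfr_n : Module.finrank F ↥K = n := by
    have h1 : q ^ n - 1 ≤ q ^ Module.finrank F ↥K - 1 := by
      calc q ^ n - 1 ≤ Fintype.card (↥K)ˣ := hord_le
        _ ≤ Fintype.card ↥K - 1 := hcard_units_le
        _ = q ^ Module.finrank F ↥K - 1 := by rw [hcardK]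
    have h2 : q ^ n ≤ q ^ Module.finrank F ↥K := by
      have : 1 ≤ q ^ Module.finrank F ↥K := Nat.one_le_pow _ _ (by omega)
      omega
    have h3 := (Nat.pow_le_pow_iff_right (by omega : 1 < q)).1 h2
    omega
  have hcardK' : Fintype.card ↥K = q ^ n := by rw [hcardK, hfr_n]
  have hcard_units : Fintype.card (↥K)ˣ = q ^ n - 1 := by
    have h2 := hcard_units_le
    rw [hcardK'] at h2
    exact le_antisymm (le_trans h2 (by omega)) hord_le
  -- K is a field
  have hbij : Function.Bijective
      (fun w : (↥K)ˣ => (⟨(w : ↥K), w.ne_zero⟩ : {k : ↥K // k ≠ 0})) := by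
    refine (Fintype.bijective_iff_injective_and_card _).2 ⟨hunits_inj, ?_⟩
    rw [hcard_units, hcard_ne, hcardK']
  have hfieldK : IsField ↥K := by
    refine ⟨⟨1, 0, one_ne_zero⟩, mul_comm, ?_⟩
    intro k hk
    obtain ⟨w, hw⟩ := hbij.2 ⟨k, hk⟩
    have hwk : (w : ↥K) = k := congrArg Subtype.val hw
    exact ⟨(w⁻¹ : (↥K)ˣ), by rw [← hwk]; exact w.mul_inv⟩
  letI instKfield : Field ↥K := hfieldK.toField
  -- x as element of K
  have hdvd_qn : d ∣ q ^ n - 1 := hdq.trans (by simpa using Nat.sub_dvd_pow_sub_pow q 1 n)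
  set N : ℕ := (q ^ n - 1) / d with hNdef
  have hNd : N * d = q ^ n - 1 := Nat.div_mul_cancel hdvd_qn
  have hordx : orderOf x = N := by
    rw [hx, orderOf_pow, hg, Nat.gcd_comm, Nat.gcd_eq_left hdvd_qn]
  have hN2 : 2 ≤ N := by
    rcases Nat.lt_or_ge N 2 with h | h
    · exfalso
      have hd1 : d ≤ q - 1 := Nat.le_of_dvd (by omega) hdq
      have hNd1 : N * d ≤ 1 * (q - 1) := Nat.mul_le_mul (by omega) hd1
      have hqlt : q ^ 1 < q ^ n := Nat.pow_lt_pow_right (by omega) (by omega)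
      rw [one_mul] at hNd1
      rw [pow_one] at hqlt
      omega
    · exact h
  set ξ : Matrix (Fin n) (Fin n) F := (x : Matrix (Fin n) (Fin n) F) with hξ
  have hξu : ξ = u ^ d := by rw [hξ, hx, hu, Units.val_pow_eq_pow_val]
  have hξK : ξ ∈ K := hξu ▸ pow_mem huK d
  set K' : Subalgebra F (Matrix (Fin n) (Fin n) F) := Algebra.adjoin F {ξ} with hK'
  have hK'le : K' ≤ K := Algebra.adjoin_le (Set.singleton_subset_iff.2 hξK)
  have hξK' : ξ ∈ K' := Algebra.subset_adjoin rfl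
  have hxinv_eq : (x⁻¹ : GL (Fin n) F) = x ^ (N - 1) := by
    have h1 : x * x ^ (N - 1) = 1 := by
      rw [← pow_succ', show N - 1 + 1 = N by omega, ← hordx]
      exact pow_orderOf_eq_one x
    exact inv_eq_of_mul_eq_one_right h1
  have hxinvK' : ((x⁻¹ : GL (Fin n) F) : Matrix (Fin n) (Fin n) F) ∈ K' := by
    rw [hxinv_eq, Units.val_pow_eq_pow_val]
    exact pow_mem hξK' _
  set xhat' : (↥K')ˣ := subUnit K' x hξK' hxinvK' with hxhat'
  have hvalinj' : Function.Injective (K'.val) := Subtype.coe_injective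
  have hord_xhat' : orderOf xhat' = N := by
    rw [← hordx, ← subUnit_map K' x hξK' hxinvK']
    exact (orderOf_injective _ (Units.map_injective hvalinj') xhat').symm
  haveI : Fintype ↥K' := Fintype.ofFinite _
  haveI : Fintype (↥K')ˣ := Fintype.ofFinite _
  haveI hK'nontriv : Nontrivial ↥K' := ⟨1, 0, fun h => by
    have := congrArg (K'.val) h
    simp at this⟩
  have hcardK'' : Fintype.card ↥K' = q ^ Module.finrank F ↥K' := by
    rw [← hF]; exact Module.card_eq_pow_finrank
  have hcard_ne' : Fintype.card {k : ↥K' // k ≠ 0} = Fintype.card ↥K' - 1 := by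
    rw [Fintype.card_subtype_compl, Fintype.card_subtype_eq]
  have hcard_units_le' : Fintype.card (↥K')ˣ ≤ Fintype.card ↥K' - 1 := by
    rw [← hcard_ne']
    exact Fintype.card_le_of_injective
      (fun w : (↥K')ˣ => (⟨(w : ↥K'), w.ne_zero⟩ : {k : ↥K' // k ≠ 0}))
      (fun w₁ w₂ h => Units.ext (congrArg Subtype.val h))
  have hord_le' : N ≤ Fintype.card (↥K')ˣ := hord_xhat' ▸ orderOf_le_card_univ
  have hfr_le : Module.finrank F ↥K' ≤ n := by
    have h1 : Module.finrank F ↥(Subalgebra.toSubmodule K') ≤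
        Module.finrank F ↥(Subalgebra.toSubmodule K) :=
      Submodule.finrank_mono (fun m hm => hK'le hm)
    have h2 : Module.finrank F ↥(Subalgebra.toSubmodule K') = Module.finrank F ↥K' := rfl
    have h3 : Module.finrank F ↥(Subalgebra.toSubmodule K) = Module.finrank F ↥K := rfl
    omega
  have hfr_n' : Module.finrank F ↥K' = n := by
    by_contra hne
    have hm : Module.finrank F ↥K' ≤ n - 1 := by omega
    have hNle : N ≤ q ^ (Module.finrank F ↥K') - 1 := by
      calc N ≤ Fintype.card (↥K')ˣ := hord_le'
        _ ≤ Fintype.card ↥K' - 1 := hcard_units_le'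
        _ = q ^ (Module.finrank F ↥K') - 1 := by rw [hcardK'']
    refine nt_size2 q n d (Module.finrank F ↥K') hq2 hn
      (Nat.le_of_dvd (by omega) hdq) hm ?_
    calc q ^ n - 1 = N * d := hNd.symm
      _ ≤ (q ^ (Module.finrank F ↥K') - 1) * d := Nat.mul_le_mul_right _ hNle
      _ = d * (q ^ (Module.finrank F ↥K') - 1) := Nat.mul_comm _ _
  have hK'K : K' = K := by
    apply Subalgebra.toSubmodule_injective
    apply Submodule.eq_of_le_of_finrank_le (fun m hm => hK'le hm)
    show Module.finrank F ↥K ≤ Module.finrank F ↥K'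
    omega
  -- characteristic and Frobenius
  obtain ⟨e, hp0prime, hqe⟩ := FiniteField.card F (ringChar F)
  rw [hF] at hqe
  haveI : Fact (ringChar F).Prime := ⟨hp0prime⟩
  haveI : CharP ↥K (ringChar F) :=
    charP_of_injective_algebraMap (algebraMap F ↥K).injective (ringChar F)
  haveI : ExpChar ↥K (ringChar F) := ExpChar.prime hp0prime
  set φ : ↥K →ₐ[F] ↥K :=
    { iterateFrobenius ↥K (ringChar F) e with
      commutes' := fun c => by
        show iterateFrobenius ↥K (ringChar F) e (algebraMap F ↥K c) = algebraMap F ↥K c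
        rw [iterateFrobenius_def, ← map_pow, ← hqe]
        congr 1
        have hc := FiniteField.pow_card c
        rw [hF] at hc
        exact hc } with hφ
  have hφ_apply : ∀ k : ↥K, φ k = k ^ q := fun k => by
    show iterateFrobenius ↥K (ringChar F) e k = k ^ q
    rw [iterateFrobenius_def, hqe]
  have hφpow : ∀ (i : ℕ) (k : ↥K), (φ ^ i) k = k ^ q ^ i := by
    intro i
    induction i with
    | zero => intro k; simp
    | succ i ih =>
      intro k
      rw [pow_succ, AlgHom.mul_apply, ih (φ k), hφ_apply k, ← pow_mul]
      congr 1
      rw [pow_succ]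
      ring
  -- the conjugation map
  set ψ : Matrix (Fin n) (Fin n) F →ₐ[F] Matrix (Fin n) (Fin n) F :=
    conjAlgHom (R := F) a with hψ
  set η : Matrix (Fin n) (Fin n) F :=
    z • ((x ^ ε : GL (Fin n) F) : Matrix (Fin n) (Fin n) F) with hη
  have hψξ : ψ ξ = η := hconj
  have hxεK : ((x ^ ε : GL (Fin n) F) : Matrix (Fin n) (Fin n) F) ∈ K := by
    rcases hε with h1 | h1
    · rw [h1, zpow_one]; exact hξK
    · rw [h1, zpow_neg_one]
      exact hK'K ▸ hxinvK'
  have hηK : η ∈ K := K.smul_mem hxεK z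
  set η' : ↥K := ⟨η, hηK⟩ with hη'
  set ξ' : ↥K := ⟨ξ, hξK⟩ with hξ'
  -- minimal polynomial of ξ
  have hξint : IsIntegral F ξ :=
    ⟨Matrix.charpoly ξ, Matrix.charpoly_monic ξ, by
      simpa [Polynomial.aeval_def] using ξ.aeval_self_charpoly⟩
  set P : Polynomial F := minpoly F ξ with hP
  have hPdeg : P.natDegree ≤ n := by
    have hdvd : P ∣ Matrix.charpoly ξ := minpoly.dvd F ξ (by
      simpa [Polynomial.aeval_def] using ξ.aeval_self_charpoly)
    have := Polynomial.natDegree_le_of_dvd hdvd (Matrix.charpoly_monic ξ).ne_zero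
    simpa [Matrix.charpoly_natDegree_eq_dim] using this
  have hPne : P ≠ 0 := minpoly.ne_zero hξint
  have hroot_ξ' : Polynomial.aeval ξ' P = 0 := by
    apply hvalinj
    rw [map_zero]
    rw [show (K.val (Polynomial.aeval ξ' P) : Matrix (Fin n) (Fin n) F) =
      Polynomial.aeval ξ P from (Polynomial.aeval_algHom_apply K.val ξ' P).symm]
    exact minpoly.aeval F ξ
  have hroot_pow : ∀ i : ℕ, Polynomial.aeval (ξ' ^ q ^ i) P = 0 := by
    intro i
    have h1 : (φ ^ i) ξ' = ξ' ^ q ^ i := hφpow i ξ'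
    rw [← h1, Polynomial.aeval_algHom_apply, hroot_ξ', map_zero]
  have hroot_η : Polynomial.aeval η' P = 0 := by
    apply hvalinj
    rw [map_zero]
    rw [show (K.val (Polynomial.aeval η' P) : Matrix (Fin n) (Fin n) F) =
      Polynomial.aeval η P from (Polynomial.aeval_algHom_apply K.val η' P).symm]
    rw [← hψξ, Polynomial.aeval_algHom_apply, minpoly.aeval, map_zero]
  -- x as a unit of K
  set xhat : (↥K)ˣ := ghat ^ d with hxhat
  have hxhat_val : (xhat : ↥K) = ξ' := by
    apply hvalinj
    show K.val ((ghat ^ d : (↥K)ˣ) : ↥K) = ξ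
    rw [Units.val_pow_eq_pow_val, map_pow]
    rw [hξu]
    rfl
  have hord_xhat : orderOf xhat = N := by
    rw [hxhat, orderOf_pow, hord_ghat, ← hg, Nat.gcd_comm, hg, Nat.gcd_eq_left hdvd_qn]
  have hNdvd : N ∣ q ^ n - 1 := ⟨d, hNd.symm⟩
  -- distinctness of the Frobenius orbit
  have hdistinct : ∀ i j : ℕ, i < n → j < n → ξ' ^ q ^ i = ξ' ^ q ^ j → i = j := by
    suffices hs : ∀ i j : ℕ, i ≤ j → j < n → ξ' ^ q ^ i = ξ' ^ q ^ j → i = j by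
      intro i j hi hj hEq
      rcases le_total i j with h | h
      · exact hs i j h hj hEq
      · exact (hs j i h hi hEq.symm).symm
    intro i j hij hj hEq
    by_contra hne
    have hij' : i < j := by omega
    have hU : xhat ^ q ^ i = xhat ^ q ^ j := by
      apply Units.ext
      calc ((xhat ^ q ^ i : (↥K)ˣ) : ↥K) = (xhat : ↥K) ^ q ^ i :=
            Units.val_pow_eq_pow_val _ _
        _ = ξ' ^ q ^ i := by rw [hxhat_val]
        _ = ξ' ^ q ^ j := hEq
        _ = (xhat : ↥K) ^ q ^ j := by rw [hxhat_val]
        _ = ((xhat ^ q ^ j : (↥K)ˣ) : ↥K) := (Units.val_pow_eq_pow_val _ _).symm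
    have hmod : q ^ i ≡ q ^ j [MOD N] := by
      rw [← hord_xhat]; exact pow_eq_pow_iff_modEq.1 hU
    have hle : q ^ i ≤ q ^ j := Nat.pow_le_pow_right (by omega) (by omega)
    have hdvd2 : N ∣ q ^ j - q ^ i := (Nat.modEq_iff_dvd' hle).1 hmod
    have hfact : q ^ j - q ^ i = q ^ i * (q ^ (j - i) - 1) := by
      rw [Nat.mul_sub, mul_one, ← pow_add]
      congr 2
      omega
    have hcopqn : Nat.Coprime (q ^ n) (q ^ n - 1) := by
      obtain ⟨m, hm⟩ : ∃ m, q ^ n - 1 = m := ⟨_, rfl⟩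
      rw [Nat.Coprime, hm, show q ^ n = m + 1 by omega, Nat.gcd_self_add_left]
      exact Nat.gcd_one_left _
    have hcopN : Nat.Coprime N (q ^ i) :=
      Nat.Coprime.coprime_dvd_right (pow_dvd_pow q (by omega))
        (Nat.Coprime.coprime_dvd_left hNdvd hcopqn.symm)
    have hdvd3 : N ∣ q ^ (j - i) - 1 :=
      hcopN.dvd_of_dvd_mul_left (hfact ▸ hdvd2)
    refine nt_size q n d (j - i) hq2 hn hdq hd0 (by omega) (by omega) ?_
    have h4 := Nat.mul_dvd_mul_right hdvd3 d
    rw [hNd] at h4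
    simpa [Nat.mul_comm] using h4
  -- root counting
  set PK : Polynomial ↥K := P.map (algebraMap F ↥K) with hPK
  have hPKne : PK ≠ 0 := Polynomial.map_ne_zero hPne
  have hPKdeg : PK.natDegree ≤ n := by
    rw [hPK, Polynomial.natDegree_map]
    exact hPdeg
  have hmemT : ∀ k : ↥K, Polynomial.aeval k P = 0 → k ∈ PK.roots.toFinset := by
    intro k hk
    rw [Multiset.mem_toFinset, Polynomial.mem_roots hPKne]
    show PK.eval k = 0
    rw [hPK, Polynomial.eval_map_algebraMap]
    exact hk
  set S : Finset ↥K := Finset.image (fun i : Fin n => ξ' ^ q ^ (i : ℕ)) Finset.univ with hS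
  have hScard : S.card = n := by
    rw [hS, Finset.card_image_of_injective _
      (fun i j hEq => Fin.ext (hdistinct _ _ i.isLt j.isLt hEq)),
      Finset.card_univ, Fintype.card_fin]
  have hST : S ⊆ PK.roots.toFinset := by
    intro k hk
    rw [hS, Finset.mem_image] at hk
    obtain ⟨i, -, rfl⟩ := hk
    exact hmemT _ (hroot_pow i)
  have hTcard : PK.roots.toFinset.card ≤ n :=
    le_trans (Multiset.toFinset_card_le _) (le_trans (Polynomial.card_roots' PK) hPKdeg)
  have hSeqT : S = PK.roots.toFinset := Finset.eq_of_subset_of_card_le hST (by omega)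
  have hηS : η' ∈ S := by rw [hSeqT]; exact hmemT η' hroot_η
  rw [hS, Finset.mem_image] at hηS
  obtain ⟨i, -, hi_eq⟩ := hηS
  -- the scalar z in K
  set zbar : ↥K := algebraMap F ↥K z with hzbar
  have hzbar_pow : zbar ^ (q - 1) = 1 := by
    have h1 := FiniteField.pow_card_sub_one_eq_one z hz
    rw [hF] at h1
    rw [hzbar, ← map_pow, h1, map_one]
  have hxinv_valK : ((x⁻¹ : GL (Fin n) F) : Matrix (Fin n) (Fin n) F) = ξ ^ (N - 1) := by
    rw [hxinv_eq, Units.val_pow_eq_pow_val]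
  have hη'_eq : ∀ e₀ : ℕ, ((x ^ ε : GL (Fin n) F) : Matrix (Fin n) (Fin n) F) = ξ ^ e₀ →
      η' = zbar * ξ' ^ e₀ := by
    intro e₀ he₀
    apply hvalinj
    show η = K.val (zbar * ξ' ^ e₀)
    rw [map_mul, map_pow, AlgHom.commutes]
    show η = algebraMap F (Matrix (Fin n) (Fin n) F) z * (K.val ξ') ^ e₀
    rw [← Algebra.smul_def]
    show η = z • ξ ^ e₀
    rw [hη, he₀]
  have hmod_master : ∀ e₀ : ℕ, η' = zbar * ξ' ^ e₀ →
      q ^ (i : ℕ) * (q - 1) ≡ e₀ * (q - 1) [MOD N] := by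
    intro e₀ he
    have h1 : ξ' ^ (q ^ (i : ℕ) * (q - 1)) = ξ' ^ (e₀ * (q - 1)) := by
      rw [pow_mul, pow_mul, hi_eq, he, mul_pow, hzbar_pow, one_mul]
    have hU : xhat ^ (q ^ (i : ℕ) * (q - 1)) = xhat ^ (e₀ * (q - 1)) := by
      apply Units.ext
      calc ((xhat ^ (q ^ (i : ℕ) * (q - 1)) : (↥K)ˣ) : ↥K)
          = (xhat : ↥K) ^ (q ^ (i : ℕ) * (q - 1)) := Units.val_pow_eq_pow_val _ _
        _ = ξ' ^ (q ^ (i : ℕ) * (q - 1)) := by rw [hxhat_val]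
        _ = ξ' ^ (e₀ * (q - 1)) := h1
        _ = (xhat : ↥K) ^ (e₀ * (q - 1)) := by rw [hxhat_val]
        _ = ((xhat ^ (e₀ * (q - 1)) : (↥K)ˣ) : ↥K) := (Units.val_pow_eq_pow_val _ _).symm
    rw [← hord_xhat]
    exact pow_eq_pow_iff_modEq.1 hU
  -- ε = -1 is impossible
  have hε1 : ε = 1 := by
    rcases hε with h1 | h1
    · exact h1
    exfalso
    have he₀ : ((x ^ ε : GL (Fin n) F) : Matrix (Fin n) (Fin n) F) = ξ ^ (N - 1) := by
      rw [h1, zpow_neg_one, hxinv_valK]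
    have hmod := hmod_master (N - 1) (hη'_eq _ he₀)
    have hmod2 : q ^ (i : ℕ) * (q - 1) + (q - 1) ≡ (N - 1) * (q - 1) + (q - 1) [MOD N] :=
      hmod.add_right _
    have hR : (N - 1) * (q - 1) + (q - 1) = N * (q - 1) := by
      have hN1 : N - 1 + 1 = N := by omega
      calc (N - 1) * (q - 1) + (q - 1) = ((N - 1) + 1) * (q - 1) := by ring
        _ = N * (q - 1) := by rw [hN1]
    rw [hR] at hmod2
    have hNq : N * (q - 1) ≡ 0 [MOD N] := Nat.modEq_zero_iff_dvd.2 ⟨q - 1, rfl⟩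
    have hmod3 : q ^ (i : ℕ) * (q - 1) + (q - 1) ≡ 0 [MOD N] := hmod2.trans hNq
    have hdvdN : N ∣ (q ^ (i : ℕ) + 1) * (q - 1) := by
      have h5 := Nat.modEq_zero_iff_dvd.1 hmod3
      have h6 : (q ^ (i : ℕ) + 1) * (q - 1) = q ^ (i : ℕ) * (q - 1) + (q - 1) := by ring
      rwa [h6]
    refine nt_b q n d (i : ℕ) hq2 hn hdq hd0 (by have := i.isLt; omega) ?_
    have h4 := Nat.mul_dvd_mul_right hdvdN d
    rw [hNd] at h4
    have h7 : ((q ^ (i : ℕ) + 1) * (q - 1)) * d = d * (q - 1) * (q ^ (i : ℕ) + 1) := by ring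
    rwa [h7] at h4
  -- now ε = 1
  have he₀1 : ((x ^ ε : GL (Fin n) F) : Matrix (Fin n) (Fin n) F) = ξ ^ 1 := by
    rw [hε1, zpow_one, pow_one]
  have hη'1 : η' = zbar * ξ' ^ 1 := hη'_eq 1 he₀1
  have hi0 : (i : ℕ) = 0 := by
    by_contra hne0
    have hmod := hmod_master 1 hη'1
    have hle1 : 1 * (q - 1) ≤ q ^ (i : ℕ) * (q - 1) :=
      Nat.mul_le_mul_right _ (Nat.one_le_pow _ _ (by omega))
    have hdvd4 : N ∣ q ^ (i : ℕ) * (q - 1) - 1 * (q - 1) :=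
      (Nat.modEq_iff_dvd' hle1).1 hmod.symm
    have heq4 : q ^ (i : ℕ) * (q - 1) - 1 * (q - 1) = (q ^ (i : ℕ) - 1) * (q - 1) := by
      rw [Nat.sub_mul]
    rw [heq4] at hdvd4
    refine nt_a q n d (i : ℕ) hq2 hn hdq hd0 (by omega) (by have := i.isLt; omega) ?_
    have h4 := Nat.mul_dvd_mul_right hdvd4 d
    rw [hNd] at h4
    have h7 : ((q ^ (i : ℕ) - 1) * (q - 1)) * d = d * (q - 1) * (q ^ (i : ℕ) - 1) := by ring
    rwa [h7] at h4
  have hξ'ne : ξ' ≠ 0 := by rw [← hxhat_val]; exact xhat.ne_zero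
  have hz1 : z = 1 := by
    have h5 : ξ' ^ q ^ (i : ℕ) = ξ' := by rw [hi0, pow_zero, pow_one]
    have h6 : zbar * ξ' = 1 * ξ' := by
      rw [one_mul]
      calc zbar * ξ' = zbar * ξ' ^ 1 := by rw [pow_one]
        _ = η' := hη'1.symm
        _ = ξ' ^ q ^ (i : ℕ) := hi_eq.symm
        _ = ξ' := h5
    have h7 : zbar = 1 := mul_right_cancel₀ hξ'ne h6
    exact (algebraMap F ↥K).injective (by rw [map_one]; exact h7)
  refine ⟨hz1, hε1, ?_⟩
  -- a commutes with ξ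
  have hηξ : η = ξ := by rw [hη, hz1, hε1, zpow_one, one_smul]
  have hconj2 : (↑a⁻¹ : Matrix (Fin n) (Fin n) F) * ξ *
      (↑a : Matrix (Fin n) (Fin n) F) = ξ := hηξ ▸ hconj
  have hcomm : ξ * (↑a : Matrix (Fin n) (Fin n) F) =
      (↑a : Matrix (Fin n) (Fin n) F) * ξ := by
    calc ξ * (↑a : Matrix (Fin n) (Fin n) F)
        = ((↑a : Matrix (Fin n) (Fin n) F) * (↑a⁻¹ : Matrix (Fin n) (Fin n) F)) * ξ *
            (↑a : Matrix (Fin n) (Fin n) F) := by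
          rw [Units.mul_inv, one_mul]
      _ = (↑a : Matrix (Fin n) (Fin n) F) * ((↑a⁻¹ : Matrix (Fin n) (Fin n) F) * ξ *
            (↑a : Matrix (Fin n) (Fin n) F)) := by noncomm_ring
      _ = (↑a : Matrix (Fin n) (Fin n) F) * ξ := by rw [hconj2]
  -- every element of K commutes with a
  have hKcentral : ∀ k : ↥K, (↑a : Matrix (Fin n) (Fin n) F) * (k : Matrix (Fin n) (Fin n) F)
      = (k : Matrix (Fin n) (Fin n) F) * (↑a : Matrix (Fin n) (Fin n) F) := by
    have hle : K ≤ Subalgebra.centralizer F {(↑a : Matrix (Fin n) (Fin n) F)} := by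
      rw [← hK'K]
      apply Algebra.adjoin_le
      intro m hm
      rw [Set.mem_singleton_iff] at hm
      subst hm
      show ξ ∈ Subalgebra.centralizer F {(↑a : Matrix (Fin n) (Fin n) F)}
      rw [Subalgebra.mem_centralizer_iff]
      intro y hy
      rw [Set.mem_singleton_iff] at hy
      subst hy
      exact hcomm.symm
    intro k
    exact (Subalgebra.mem_centralizer_iff F).1 (hle k.2) _ rfl
  -- (Fin n → F) as a K-vector space
  letI instModuleKV : Module ↥K (Fin n → F) :=
    { smul := fun k v => (k : Matrix (Fin n) (Fin n) F).mulVec v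
      one_smul := fun v => by
        show ((1 : ↥K) : Matrix (Fin n) (Fin n) F).mulVec v = v
        rw [OneMemClass.coe_one, Matrix.one_mulVec]
      mul_smul := fun k l v => by
        show ((k * l : ↥K) : Matrix (Fin n) (Fin n) F).mulVec v
          = (k : Matrix (Fin n) (Fin n) F).mulVec ((l : Matrix (Fin n) (Fin n) F).mulVec v)
        rw [MulMemClass.coe_mul, Matrix.mulVec_mulVec]
      smul_zero := fun k => Matrix.mulVec_zero _
      smul_add := fun k v w => Matrix.mulVec_add _ _ _
      add_smul := fun k l v => by
        show ((k + l : ↥K) : Matrix (Fin n) (Fin n) F).mulVec v = _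
        rw [AddMemClass.coe_add, Matrix.add_mulVec]
        rfl
      zero_smul := fun v => by
        show ((0 : ↥K) : Matrix (Fin n) (Fin n) F).mulVec v = 0
        rw [ZeroMemClass.coe_zero, Matrix.zero_mulVec] }
  have hsmul_def : ∀ (k : ↥K) (v : Fin n → F),
      k • v = (k : Matrix (Fin n) (Fin n) F).mulVec v := fun _ _ => rfl
  haveI instTower : IsScalarTower F ↥K (Fin n → F) := ⟨fun f k v => by
    rw [hsmul_def, hsmul_def]
    show ((f • k : ↥K) : Matrix (Fin n) (Fin n) F).mulVec v = _
    rw [Subalgebra.coe_smul, Matrix.smul_mulVec]⟩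
  have hfrV : Module.finrank F (Fin n → F) = n := by
    rw [Module.finrank_pi]
    exact Fintype.card_fin n
  have hfr1 : Module.finrank ↥K (Fin n → F) = 1 := by
    have htower := Module.finrank_mul_finrank F ↥K (Fin n → F)
    rw [hfrV, hfr_n] at htower
    exact Nat.eq_of_mul_eq_mul_left (show 0 < n by omega)
      (by rw [htower, Nat.mul_one] : n * Module.finrank ↥K (Fin n → F) = n * 1)
  -- a is (the matrix of) an element of K
  set v₀ : Fin n → F := Pi.single (⟨0, by omega⟩ : Fin n) 1 with hv₀def
  have hv₀ : v₀ ≠ 0 := by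
    intro hcon
    have h1 := congrFun hcon ⟨0, by omega⟩
    rw [hv₀def] at h1
    simp [Pi.single_eq_same] at h1
  have hspan : Submodule.span ↥K {v₀} = ⊤ :=
    (finrank_eq_one_iff_of_nonzero v₀ hv₀).1 hfr1
  have hsmul_comm : ∀ (k : ↥K) (v : Fin n → F),
      (↑a : Matrix (Fin n) (Fin n) F).mulVec (k • v)
        = k • ((↑a : Matrix (Fin n) (Fin n) F).mulVec v) := by
    intro k v
    show (↑a : Matrix (Fin n) (Fin n) F).mulVec ((k : Matrix (Fin n) (Fin n) F).mulVec v)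
      = (k : Matrix (Fin n) (Fin n) F).mulVec ((↑a : Matrix (Fin n) (Fin n) F).mulVec v)
    rw [Matrix.mulVec_mulVec, Matrix.mulVec_mulVec, hKcentral k]
  have hv₀mem : (↑a : Matrix (Fin n) (Fin n) F).mulVec v₀ ∈ Submodule.span ↥K {v₀} := by
    rw [hspan]; exact Submodule.mem_top
  obtain ⟨c, hc⟩ := Submodule.mem_span_singleton.1 hv₀mem
  have hagree : ∀ v : Fin n → F,
      (↑a : Matrix (Fin n) (Fin n) F).mulVec v
        = (↑c : Matrix (Fin n) (Fin n) F).mulVec v := by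
    intro v
    have hvmem : v ∈ Submodule.span ↥K {v₀} := by rw [hspan]; exact Submodule.mem_top
    obtain ⟨k, hk⟩ := Submodule.mem_span_singleton.1 hvmem
    rw [← hk, hsmul_comm k v₀, ← hc]
    show k • (c • v₀) = c • (k • v₀)
    rw [← mul_smul, mul_comm, mul_smul]
  have hmat : (↑a : Matrix (Fin n) (Fin n) F) = (↑c : Matrix (Fin n) (Fin n) F) := by
    ext i' j'
    have h1 := congrFun (hagree (Pi.single j' 1)) i'
    rw [Matrix.mulVec_single_one, Matrix.mulVec_single_one] at h1
    simpa [Matrix.transpose_apply] using h1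
  have haK : ((a : GL (Fin n) F) : Matrix (Fin n) (Fin n) F) ∈ K := by rw [hmat]; exact c.2
  have horda : 0 < orderOf a := orderOf_pos a
  have hainv_eq : (a⁻¹ : GL (Fin n) F) = a ^ (orderOf a - 1) := by
    have h1 : a * a ^ (orderOf a - 1) = 1 := by
      rw [← pow_succ', show orderOf a - 1 + 1 = orderOf a by omega]
      exact pow_orderOf_eq_one a
    exact inv_eq_of_mul_eq_one_right h1
  have hainvK : ((a⁻¹ : GL (Fin n) F) : Matrix (Fin n) (Fin n) F) ∈ K := by
    rw [hainv_eq, Units.val_pow_eq_pow_val]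
    exact pow_mem haK _
  set ahat : (↥K)ˣ := subUnit K a haK hainvK with hahat
  have hmap_ahat : Units.map (K.val.toRingHom.toMonoidHom) ahat = a := subUnit_map _ _ _ _
  have htop : Subgroup.zpowers ghat = ⊤ := by
    rw [← Subgroup.card_eq_iff_eq_top, Nat.card_zpowers, hord_ghat,
      Nat.card_eq_fintype_card, hcard_units]
  have hmemz : ahat ∈ Subgroup.zpowers ghat := by rw [htop]; exact Subgroup.mem_top _
  obtain ⟨m, hm⟩ := Subgroup.mem_zpowers_iff.1 hmemz
  rw [Subgroup.mem_zpowers_iff]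
  refine ⟨m, ?_⟩
  have hfin := congrArg (Units.map (K.val.toRingHom.toMonoidHom)) hm
  rw [MonoidHom.map_zpow, hmap_ghat, hmap_ahat] at hfin
  exact hfin
end

section
/- Let n ≥ 3 be an integer, let q be a prime power, and let λ be an element of the finite field F_{q^n} of multiplicative order (q^n − 1)/gcd(n, q−1). Then for every integer i with 0 ≤ i ≤ n − 1 and every nonzero z ∈ F_q (viewed inside F_{q^n} via the canonical embedding), the equation λ^{q^i + 1} = z has no solution; that is, λ^{q^i + 1} does not lie in the subfield F_q. -/
/-!
If `λ ^ (q ^ i + 1) = z ∈ F_q^×`, then raising to the power `q ^ (n - i)` and using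
`λ ^ (q ^ n) = λ`, `z ^ q = z` gives `λ ^ (q ^ (n - i) + 1) = z`; so we may assume `i ≤ n - 2`.
Then `orderOf λ ∣ (q ^ i + 1) (q - 1)`, while `gcd n (q - 1) ≤ q - 1` forces
`(q - 1) · orderOf λ ≥ q ^ n - 1`, and `(q - 1) ^ 2 (q ^ (n - 2) + 1) < q ^ n - 1` for `n ≥ 3`.
-/

section FiniteFieldExtension

variable {F E : Type*} [Field F] [Fintype F]

theorem pow_card_pow_sub_add_one_eq_of_pow_card_pow_add_one_eq [Field E] [Algebra F E]
    [Fintype E] {n i : ℕ} (hE : Fintype.card E = Fintype.card F ^ n) (hi : i ≤ n)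
    {x : E} {z : F} (h : x ^ (Fintype.card F ^ i + 1) = algebraMap F E z) :
    x ^ (Fintype.card F ^ (n - i) + 1) = algebraMap F E z :=
  calc x ^ (Fintype.card F ^ (n - i) + 1)
      = x ^ Fintype.card E * x ^ Fintype.card F ^ (n - i) := by
        rw [FiniteField.pow_card, pow_succ', mul_comm]
    _ = (x ^ (Fintype.card F ^ i + 1)) ^ Fintype.card F ^ (n - i) := by
        rw [← pow_mul, add_mul, one_mul, ← pow_add, hE, ← pow_add, Nat.add_sub_cancel' hi]
    _ = algebraMap F E z := by rw [h, ← map_pow, FiniteField.pow_card_pow]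

theorem orderOf_dvd_mul_card_sub_one_of_pow_eq_algebraMap [Semiring E] [Algebra F E]
    {x : E} {z : F} (hz : z ≠ 0) {k : ℕ} (h : x ^ k = algebraMap F E z) :
    orderOf x ∣ k * (Fintype.card F - 1) :=
  orderOf_dvd_of_pow_eq_one <| by
    rw [pow_mul, h, ← map_pow, FiniteField.pow_card_sub_one_eq_one z hz, map_one]

end FiniteFieldExtension

theorem sub_one_sq_mul_pow_sub_two_add_one_lt {q n : ℕ} (hq : 2 ≤ q) (hn : 3 ≤ n) :
    (q - 1) * ((q - 1) * (q ^ (n - 2) + 1)) < q ^ n - 1 := by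
  obtain ⟨s, rfl⟩ : ∃ s, q = s + 1 := ⟨q - 1, by omega⟩
  have hx : s + 1 ≤ (s + 1) ^ (n - 2) := Nat.le_self_pow (by omega) _
  rw [show n = (n - 2) + 2 by omega, pow_add, Nat.add_sub_cancel, Nat.add_sub_cancel]
  generalize (s + 1) ^ (n - 2) = x at hx
  have : s * (s * (x + 1)) + 1 < x * (s + 1) ^ 2 := by nlinarith
  omega

theorem pow_qi_add_one_not_in_base_field_general
    (n q : ℕ) (hn : 3 ≤ n)
    (F E : Type*) [Field F] [Field E] [Algebra F E]
    [Fintype F] [Fintype E]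
    (hF : Fintype.card F = q) (hE : Fintype.card E = q ^ n)
    (lam : E) (hlam : orderOf lam = (q ^ n - 1) / Nat.gcd n (q - 1)) :
    ∀ i : ℕ, i ≤ n - 1 → ∀ z : F, z ≠ 0 → lam ^ (q ^ i + 1) ≠ algebraMap F E z := by
  subst hF
  intro i hi z hz heq
  have hq : 2 ≤ Fintype.card F := Fintype.one_lt_card
  obtain ⟨j, hj, hlamj⟩ : ∃ j ≤ n - 2, lam ^ (Fintype.card F ^ j + 1) = algebraMap F E z := by
    by_cases hin : i ≤ n - 2
    · exact ⟨i, hin, heq⟩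
    · exact ⟨n - i, by omega,
        pow_card_pow_sub_add_one_eq_of_pow_card_pow_add_one_eq hE (by omega) heq⟩
  have hord : orderOf lam ≤ (Fintype.card F - 1) * (Fintype.card F ^ (n - 2) + 1) :=
    calc orderOf lam ≤ (Fintype.card F ^ j + 1) * (Fintype.card F - 1) :=
          Nat.le_of_dvd (Nat.mul_pos (by positivity) (by omega))
            (orderOf_dvd_mul_card_sub_one_of_pow_eq_algebraMap hz hlamj)
      _ ≤ (Fintype.card F - 1) * (Fintype.card F ^ (n - 2) + 1) := by
          rw [mul_comm]; gcongr; omega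
  have hgcd_dvd : Nat.gcd n (Fintype.card F - 1) ∣ Fintype.card F ^ n - 1 :=
    (Nat.gcd_dvd_right _ _).trans (by simpa using Nat.sub_dvd_pow_sub_pow (Fintype.card F) 1 n)
  have hbound : Fintype.card F ^ n - 1 ≤ (Fintype.card F - 1) * orderOf lam :=
    calc Fintype.card F ^ n - 1 = Nat.gcd n (Fintype.card F - 1) * orderOf lam := by
          rw [hlam, Nat.mul_div_cancel' hgcd_dvd]
      _ ≤ (Fintype.card F - 1) * orderOf lam :=
          Nat.mul_le_mul_right _ (Nat.gcd_le_right _ (by omega))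
  have := sub_one_sq_mul_pow_sub_two_add_one_lt hq hn
  have := Nat.mul_le_mul_left (Fintype.card F - 1) hord
  omega

/-- Let `n ≥ 3`, let `q` be a prime power, and let `λ` be an element of `F_{q^n}` of
multiplicative order `(q ^ n - 1) / gcd n (q - 1)`.  Then for every `0 ≤ i ≤ n - 1` and
every nonzero `z ∈ F_q`, we have `λ ^ (q ^ i + 1) ≠ z`; that is, `λ ^ (q ^ i + 1)` does
not lie in the subfield `F_q`. -/
theorem pow_qi_add_one_not_in_base_field
    (n q : ℕ) (hn : 3 ≤ n) (hq : IsPrimePow q)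
    (F E : Type*) [Field F] [Field E] [Algebra F E]
    [Fintype F] [Fintype E]
    (hF : Fintype.card F = q) (hE : Fintype.card E = q ^ n)
    (lam : E) (hlam : orderOf lam = (q ^ n - 1) / Nat.gcd n (q - 1)) :
    ∀ i : ℕ, i ≤ n - 1 → ∀ z : F, z ≠ 0 → lam ^ (q ^ i + 1) ≠ algebraMap F E z :=
  pow_qi_add_one_not_in_base_field_general n q hn F E hF hE lam hlam
end

section
/- Let s₁ = (1,2,3,4,5,6,7) and s₂ = (1,2,3,4,6,7,5) be the indicated 7-cycles in the symmetric group on 7 points. Then s₁ and s₂ generate the alternating group Alt(7), and there is no permutation σ in the symmetric group Sym(7) such that σ⁻¹ s₁ σ = s₁⁻¹ and σ⁻¹ s₂ σ = s₂⁻¹. -/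
set_option maxRecDepth 20000

theorem threeCycle_decomp {α : Type*} [DecidableEq α] [Fintype α] (σ : Equiv.Perm α)
    (hσ : σ.IsThreeCycle) :
    ∃ a b c, a ≠ b ∧ b ≠ c ∧ a ≠ c ∧ σ = Equiv.swap a b * Equiv.swap b c := by
  obtain ⟨a, ha, -⟩ := hσ.isCycle
  have h3 : σ ^ 3 = 1 := by rw [← hσ.orderOf]; exact pow_orderOf_eq_one σ
  have hca : σ (σ (σ a)) = a := by
    have := congrArg (fun τ : Equiv.Perm α => τ a) h3
    simpa [pow_succ, Equiv.Perm.mul_apply] using this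
  set b := σ a with hb
  set c := σ b with hc
  -- now ha : b ≠ a, hca : σ c = a
  have hab : a ≠ b := fun h => ha h.symm
  have hbc : b ≠ c := by
    intro h
    have h1 : σ b = b := by rw [← hc]; exact h.symm
    rw [← h] at hca
    exact hab (hca.symm.trans h1)
  have hac : a ≠ c := by
    intro h
    rw [← h] at hca
    exact ha (hb.trans hca)
  have hsub : ({a, b, c} : Finset α) ⊆ σ.support := by
    intro x hx
    simp only [Finset.mem_insert, Finset.mem_singleton] at hx
    rw [Equiv.Perm.mem_support]
    rcases hx with rfl | rfl | rfl
    · rw [← hb]; exact fun h => hab h.symm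
    · rw [← hc]; exact fun h => hbc h.symm
    · rw [hca]; exact hac
  have hcard : ({a, b, c} : Finset α).card = 3 := by
    rw [Finset.card_insert_of_notMem (by simp [hab, hac]),
      Finset.card_insert_of_notMem (by simp [hbc]), Finset.card_singleton]
  have hsupp : σ.support = {a, b, c} :=
    (Finset.eq_of_subset_of_card_le hsub (by rw [hσ.card_support, hcard])).symm
  refine ⟨a, b, c, hab, hbc, hac, Equiv.ext fun x => ?_⟩
  rw [Equiv.Perm.mul_apply]
  by_cases hxa : x = a
  · subst hxa
    rw [Equiv.swap_apply_of_ne_of_ne hab hac, Equiv.swap_apply_left, ← hb]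
  by_cases hxb : x = b
  · subst hxb
    rw [Equiv.swap_apply_left, Equiv.swap_apply_of_ne_of_ne (fun h => hac h.symm) (fun h => hbc h.symm), ← hc]
  by_cases hxc : x = c
  · subst hxc
    rw [Equiv.swap_apply_right, Equiv.swap_apply_right, hca]
  · have hx : x ∉ σ.support := by
      rw [hsupp]
      simp [hxa, hxb, hxc]
    rw [Equiv.Perm.notMem_support.mp hx, Equiv.swap_apply_of_ne_of_ne hxb hxc,
      Equiv.swap_apply_of_ne_of_ne hxa hxb]

set_option maxRecDepth 20000
open Equiv Equiv.Perm Subgroup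

namespace AltSevenAux

def g1 : Equiv.Perm (Fin 7) := c[0, 1, 2, 3, 4, 5, 6]
def g2 : Equiv.Perm (Fin 7) := c[0, 1, 2, 3, 5, 6, 4]
def H : Subgroup (Equiv.Perm (Fin 7)) := Subgroup.closure {g1, g2}

theorem hg1 : g1 ∈ H := subset_closure (Or.inl rfl)
theorem hg2 : g2 ∈ H := subset_closure (Or.inr rfl)
theorem hmem {x y : Equiv.Perm (Fin 7)} (h : x = y) (hy : y ∈ H) : x ∈ H := h ▸ hy

theorem m012 : c[(0:Fin 7), 1, 2] ∈ H := hmem (by decide : c[(0:Fin 7), 1, 2] = g1*g2*g1*g2⁻¹*g2⁻¹*g1⁻¹) (mul_mem (mul_mem (mul_mem (mul_mem (mul_mem hg1 hg2) hg1) (inv_mem hg2)) (inv_mem hg2)) (inv_mem hg1))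
theorem m013 : c[(0:Fin 7), 1, 3] ∈ H := hmem (by decide : c[(0:Fin 7), 1, 3] = g1*g1*g1*g2*g1*g1*g1) (mul_mem (mul_mem (mul_mem (mul_mem (mul_mem (mul_mem hg1 hg1) hg1) hg2) hg1) hg1) hg1)
theorem m014 : c[(0:Fin 7), 1, 4] ∈ H := hmem (by decide : c[(0:Fin 7), 1, 4] = g1*g1*g2⁻¹*g2⁻¹*g1*g2*g1⁻¹*g1⁻¹) (mul_mem (mul_mem (mul_mem (mul_mem (mul_mem (mul_mem (mul_mem hg1 hg1) (inv_mem hg2)) (inv_mem hg2)) hg1) hg2) (inv_mem hg1)) (inv_mem hg1))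
theorem m015 : c[(0:Fin 7), 1, 5] ∈ H := hmem (by decide : c[(0:Fin 7), 1, 5] = g2*g1*g2⁻¹*g2⁻¹*g1*g2*g1⁻¹*g1⁻¹) (mul_mem (mul_mem (mul_mem (mul_mem (mul_mem (mul_mem (mul_mem hg2 hg1) (inv_mem hg2)) (inv_mem hg2)) hg1) hg2) (inv_mem hg1)) (inv_mem hg1))
theorem m016 : c[(0:Fin 7), 1, 6] ∈ H := hmem (by decide : c[(0:Fin 7), 1, 6] = g2*g1*g2⁻¹*g2⁻¹) (mul_mem (mul_mem (mul_mem hg2 hg1) (inv_mem hg2)) (inv_mem hg2))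
theorem m021 : c[(0:Fin 7), 2, 1] ∈ H := hmem (by decide : c[(0:Fin 7), 2, 1] = g1*g2*g2*g1⁻¹*g2⁻¹*g1⁻¹) (mul_mem (mul_mem (mul_mem (mul_mem (mul_mem hg1 hg2) hg2) (inv_mem hg1)) (inv_mem hg2)) (inv_mem hg1))
theorem m023 : c[(0:Fin 7), 2, 3] ∈ H := hmem (by decide : c[(0:Fin 7), 2, 3] = g2*g2*g2*g1*g2*g2*g2) (mul_mem (mul_mem (mul_mem (mul_mem (mul_mem (mul_mem hg2 hg2) hg2) hg1) hg2) hg2) hg2)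
theorem m024 : c[(0:Fin 7), 2, 4] ∈ H := hmem (by decide : c[(0:Fin 7), 2, 4] = g1⁻¹*g2*g1⁻¹*g2⁻¹*g1⁻¹*g2*g1⁻¹*g1⁻¹) (mul_mem (mul_mem (mul_mem (mul_mem (mul_mem (mul_mem (mul_mem (inv_mem hg1) hg2) (inv_mem hg1)) (inv_mem hg2)) (inv_mem hg1)) hg2) (inv_mem hg1)) (inv_mem hg1))
theorem m025 : c[(0:Fin 7), 2, 5] ∈ H := hmem (by decide : c[(0:Fin 7), 2, 5] = g1⁻¹*g2*g1⁻¹*g1⁻¹*g1⁻¹*g2*g1⁻¹*g2⁻¹) (mul_mem (mul_mem (mul_mem (mul_mem (mul_mem (mul_mem (mul_mem (inv_mem hg1) hg2) (inv_mem hg1)) (inv_mem hg1)) (inv_mem hg1)) hg2) (inv_mem hg1)) (inv_mem hg2))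
theorem m026 : c[(0:Fin 7), 2, 6] ∈ H := hmem (by decide : c[(0:Fin 7), 2, 6] = g1*g1*g2*g1⁻¹*g1⁻¹*g1⁻¹) (mul_mem (mul_mem (mul_mem (mul_mem (mul_mem hg1 hg1) hg2) (inv_mem hg1)) (inv_mem hg1)) (inv_mem hg1))
theorem m031 : c[(0:Fin 7), 3, 1] ∈ H := hmem (by decide : c[(0:Fin 7), 3, 1] = g1⁻¹*g1⁻¹*g1⁻¹*g2⁻¹*g1⁻¹*g1⁻¹*g1⁻¹) (mul_mem (mul_mem (mul_mem (mul_mem (mul_mem (mul_mem (inv_mem hg1) (inv_mem hg1)) (inv_mem hg1)) (inv_mem hg2)) (inv_mem hg1)) (inv_mem hg1)) (inv_mem hg1))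
theorem m032 : c[(0:Fin 7), 3, 2] ∈ H := hmem (by decide : c[(0:Fin 7), 3, 2] = g2⁻¹*g2⁻¹*g2⁻¹*g1⁻¹*g2⁻¹*g2⁻¹*g2⁻¹) (mul_mem (mul_mem (mul_mem (mul_mem (mul_mem (mul_mem (inv_mem hg2) (inv_mem hg2)) (inv_mem hg2)) (inv_mem hg1)) (inv_mem hg2)) (inv_mem hg2)) (inv_mem hg2))
theorem m034 : c[(0:Fin 7), 3, 4] ∈ H := hmem (by decide : c[(0:Fin 7), 3, 4] = g1*g2⁻¹*g2⁻¹*g1*g2*g1⁻¹*g1⁻¹*g2) (mul_mem (mul_mem (mul_mem (mul_mem (mul_mem (mul_mem (mul_mem hg1 (inv_mem hg2)) (inv_mem hg2)) hg1) hg2) (inv_mem hg1)) (inv_mem hg1)) hg2)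
theorem m035 : c[(0:Fin 7), 3, 5] ∈ H := hmem (by decide : c[(0:Fin 7), 3, 5] = g2⁻¹*g1*g2*g1⁻¹*g1⁻¹*g2) (mul_mem (mul_mem (mul_mem (mul_mem (mul_mem (inv_mem hg2) hg1) hg2) (inv_mem hg1)) (inv_mem hg1)) hg2)
theorem m036 : c[(0:Fin 7), 3, 6] ∈ H := hmem (by decide : c[(0:Fin 7), 3, 6] = g1*g2⁻¹*g2⁻¹*g1*g2*g1⁻¹) (mul_mem (mul_mem (mul_mem (mul_mem (mul_mem hg1 (inv_mem hg2)) (inv_mem hg2)) hg1) hg2) (inv_mem hg1))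
theorem m041 : c[(0:Fin 7), 4, 1] ∈ H := hmem (by decide : c[(0:Fin 7), 4, 1] = g1*g1*g2⁻¹*g1⁻¹*g2*g2*g1⁻¹*g1⁻¹) (mul_mem (mul_mem (mul_mem (mul_mem (mul_mem (mul_mem (mul_mem hg1 hg1) (inv_mem hg2)) (inv_mem hg1)) hg2) hg2) (inv_mem hg1)) (inv_mem hg1))
theorem m042 : c[(0:Fin 7), 4, 2] ∈ H := hmem (by decide : c[(0:Fin 7), 4, 2] = g1*g1*g2⁻¹*g1*g2*g1*g2⁻¹*g1) (mul_mem (mul_mem (mul_mem (mul_mem (mul_mem (mul_mem (mul_mem hg1 hg1) (inv_mem hg2)) hg1) hg2) hg1) (inv_mem hg2)) hg1)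
theorem m043 : c[(0:Fin 7), 4, 3] ∈ H := hmem (by decide : c[(0:Fin 7), 4, 3] = g1*g1*g2*g1⁻¹*g2⁻¹*g1*g2*g2) (mul_mem (mul_mem (mul_mem (mul_mem (mul_mem (mul_mem (mul_mem hg1 hg1) hg2) (inv_mem hg1)) (inv_mem hg2)) hg1) hg2) hg2)
theorem m045 : c[(0:Fin 7), 4, 5] ∈ H := hmem (by decide : c[(0:Fin 7), 4, 5] = g2*g1⁻¹) (mul_mem hg2 (inv_mem hg1))
theorem m046 : c[(0:Fin 7), 4, 6] ∈ H := hmem (by decide : c[(0:Fin 7), 4, 6] = g1*g2*g1⁻¹*g1⁻¹*g2*g1*g2⁻¹*g1⁻¹) (mul_mem (mul_mem (mul_mem (mul_mem (mul_mem (mul_mem (mul_mem hg1 hg2) (inv_mem hg1)) (inv_mem hg1)) hg2) hg1) (inv_mem hg2)) (inv_mem hg1))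
theorem m051 : c[(0:Fin 7), 5, 1] ∈ H := hmem (by decide : c[(0:Fin 7), 5, 1] = g1*g1*g2⁻¹*g1⁻¹*g2*g2*g1⁻¹*g2⁻¹) (mul_mem (mul_mem (mul_mem (mul_mem (mul_mem (mul_mem (mul_mem hg1 hg1) (inv_mem hg2)) (inv_mem hg1)) hg2) hg2) (inv_mem hg1)) (inv_mem hg2))
theorem m052 : c[(0:Fin 7), 5, 2] ∈ H := hmem (by decide : c[(0:Fin 7), 5, 2] = g2*g1*g2⁻¹*g1*g1*g1*g2⁻¹*g1) (mul_mem (mul_mem (mul_mem (mul_mem (mul_mem (mul_mem (mul_mem hg2 hg1) (inv_mem hg2)) hg1) hg1) hg1) (inv_mem hg2)) hg1)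
theorem m053 : c[(0:Fin 7), 5, 3] ∈ H := hmem (by decide : c[(0:Fin 7), 5, 3] = g2⁻¹*g1*g1*g2⁻¹*g1⁻¹*g2) (mul_mem (mul_mem (mul_mem (mul_mem (mul_mem (inv_mem hg2) hg1) hg1) (inv_mem hg2)) (inv_mem hg1)) hg2)
theorem m054 : c[(0:Fin 7), 5, 4] ∈ H := hmem (by decide : c[(0:Fin 7), 5, 4] = g1*g2⁻¹) (mul_mem hg1 (inv_mem hg2))
theorem m056 : c[(0:Fin 7), 5, 6] ∈ H := hmem (by decide : c[(0:Fin 7), 5, 6] = g1⁻¹*g2*g1*g2⁻¹*g2⁻¹*g1) (mul_mem (mul_mem (mul_mem (mul_mem (mul_mem (inv_mem hg1) hg2) hg1) (inv_mem hg2)) (inv_mem hg2)) hg1)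
theorem m061 : c[(0:Fin 7), 6, 1] ∈ H := hmem (by decide : c[(0:Fin 7), 6, 1] = g2*g2*g1⁻¹*g2⁻¹) (mul_mem (mul_mem (mul_mem hg2 hg2) (inv_mem hg1)) (inv_mem hg2))
theorem m062 : c[(0:Fin 7), 6, 2] ∈ H := hmem (by decide : c[(0:Fin 7), 6, 2] = g1*g1*g1*g2⁻¹*g1⁻¹*g1⁻¹) (mul_mem (mul_mem (mul_mem (mul_mem (mul_mem hg1 hg1) hg1) (inv_mem hg2)) (inv_mem hg1)) (inv_mem hg1))
theorem m063 : c[(0:Fin 7), 6, 3] ∈ H := hmem (by decide : c[(0:Fin 7), 6, 3] = g1*g2⁻¹*g1⁻¹*g2*g2*g1⁻¹) (mul_mem (mul_mem (mul_mem (mul_mem (mul_mem hg1 (inv_mem hg2)) (inv_mem hg1)) hg2) hg2) (inv_mem hg1))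
theorem m064 : c[(0:Fin 7), 6, 4] ∈ H := hmem (by decide : c[(0:Fin 7), 6, 4] = g1*g2*g1⁻¹*g2⁻¹*g1*g1*g2⁻¹*g1⁻¹) (mul_mem (mul_mem (mul_mem (mul_mem (mul_mem (mul_mem (mul_mem hg1 hg2) (inv_mem hg1)) (inv_mem hg2)) hg1) hg1) (inv_mem hg2)) (inv_mem hg1))
theorem m065 : c[(0:Fin 7), 6, 5] ∈ H := hmem (by decide : c[(0:Fin 7), 6, 5] = g1⁻¹*g2*g2*g1⁻¹*g2⁻¹*g1) (mul_mem (mul_mem (mul_mem (mul_mem (mul_mem (inv_mem hg1) hg2) hg2) (inv_mem hg1)) (inv_mem hg2)) hg1)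
theorem m123 : c[(1:Fin 7), 2, 3] ∈ H := hmem (by decide : c[(1:Fin 7), 2, 3] = g2⁻¹*g1⁻¹*g1⁻¹*g2*g1*g2) (mul_mem (mul_mem (mul_mem (mul_mem (mul_mem (inv_mem hg2) (inv_mem hg1)) (inv_mem hg1)) hg2) hg1) hg2)
theorem m124 : c[(1:Fin 7), 2, 4] ∈ H := hmem (by decide : c[(1:Fin 7), 2, 4] = g2*g2*g1*g2⁻¹*g2⁻¹*g2⁻¹) (mul_mem (mul_mem (mul_mem (mul_mem (mul_mem hg2 hg2) hg1) (inv_mem hg2)) (inv_mem hg2)) (inv_mem hg2))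
theorem m125 : c[(1:Fin 7), 2, 5] ∈ H := hmem (by decide : c[(1:Fin 7), 2, 5] = g1⁻¹*g1⁻¹*g2⁻¹*g2⁻¹*g1⁻¹*g2*g1*g2⁻¹) (mul_mem (mul_mem (mul_mem (mul_mem (mul_mem (mul_mem (mul_mem (inv_mem hg1) (inv_mem hg1)) (inv_mem hg2)) (inv_mem hg2)) (inv_mem hg1)) hg2) hg1) (inv_mem hg2))
theorem m126 : c[(1:Fin 7), 2, 6] ∈ H := hmem (by decide : c[(1:Fin 7), 2, 6] = g1⁻¹*g2*g1*g2⁻¹*g1⁻¹*g1⁻¹*g2⁻¹*g2⁻¹) (mul_mem (mul_mem (mul_mem (mul_mem (mul_mem (mul_mem (mul_mem (inv_mem hg1) hg2) hg1) (inv_mem hg2)) (inv_mem hg1)) (inv_mem hg1)) (inv_mem hg2)) (inv_mem hg2))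
theorem m132 : c[(1:Fin 7), 3, 2] ∈ H := hmem (by decide : c[(1:Fin 7), 3, 2] = g2⁻¹*g1⁻¹*g2⁻¹*g1*g1*g2) (mul_mem (mul_mem (mul_mem (mul_mem (mul_mem (inv_mem hg2) (inv_mem hg1)) (inv_mem hg2)) hg1) hg1) hg2)
theorem m134 : c[(1:Fin 7), 3, 4] ∈ H := hmem (by decide : c[(1:Fin 7), 3, 4] = g2*g1*g1*g2*g1⁻¹*g1⁻¹*g1⁻¹*g2⁻¹) (mul_mem (mul_mem (mul_mem (mul_mem (mul_mem (mul_mem (mul_mem hg2 hg1) hg1) hg2) (inv_mem hg1)) (inv_mem hg1)) (inv_mem hg1)) (inv_mem hg2))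
theorem m135 : c[(1:Fin 7), 3, 5] ∈ H := hmem (by decide : c[(1:Fin 7), 3, 5] = g2⁻¹*g2⁻¹*g2⁻¹*g1*g2*g2) (mul_mem (mul_mem (mul_mem (mul_mem (mul_mem (inv_mem hg2) (inv_mem hg2)) (inv_mem hg2)) hg1) hg2) hg2)
theorem m136 : c[(1:Fin 7), 3, 6] ∈ H := hmem (by decide : c[(1:Fin 7), 3, 6] = g1*g2⁻¹*g1⁻¹*g1⁻¹*g2*g1⁻¹*g2⁻¹*g2⁻¹) (mul_mem (mul_mem (mul_mem (mul_mem (mul_mem (mul_mem (mul_mem hg1 (inv_mem hg2)) (inv_mem hg1)) (inv_mem hg1)) hg2) (inv_mem hg1)) (inv_mem hg2)) (inv_mem hg2))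
theorem m142 : c[(1:Fin 7), 4, 2] ∈ H := hmem (by decide : c[(1:Fin 7), 4, 2] = g2*g2*g2*g1⁻¹*g2⁻¹*g2⁻¹) (mul_mem (mul_mem (mul_mem (mul_mem (mul_mem hg2 hg2) hg2) (inv_mem hg1)) (inv_mem hg2)) (inv_mem hg2))
theorem m143 : c[(1:Fin 7), 4, 3] ∈ H := hmem (by decide : c[(1:Fin 7), 4, 3] = g1*g2⁻¹*g1*g1*g1*g2⁻¹*g1*g2) (mul_mem (mul_mem (mul_mem (mul_mem (mul_mem (mul_mem (mul_mem hg1 (inv_mem hg2)) hg1) hg1) hg1) (inv_mem hg2)) hg1) hg2)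
theorem m145 : c[(1:Fin 7), 4, 5] ∈ H := hmem (by decide : c[(1:Fin 7), 4, 5] = g1⁻¹*g2⁻¹*g2⁻¹*g1*g2*g1) (mul_mem (mul_mem (mul_mem (mul_mem (mul_mem (inv_mem hg1) (inv_mem hg2)) (inv_mem hg2)) hg1) hg2) hg1)
theorem m146 : c[(1:Fin 7), 4, 6] ∈ H := hmem (by decide : c[(1:Fin 7), 4, 6] = g1*g2⁻¹*g1*g2*g1⁻¹*g1⁻¹*g2*g1⁻¹) (mul_mem (mul_mem (mul_mem (mul_mem (mul_mem (mul_mem (mul_mem hg1 (inv_mem hg2)) hg1) hg2) (inv_mem hg1)) (inv_mem hg1)) hg2) (inv_mem hg1))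
theorem m152 : c[(1:Fin 7), 5, 2] ∈ H := hmem (by decide : c[(1:Fin 7), 5, 2] = g1*g2*g1⁻¹*g1⁻¹*g2⁻¹*g1⁻¹*g2*g2) (mul_mem (mul_mem (mul_mem (mul_mem (mul_mem (mul_mem (mul_mem hg1 hg2) (inv_mem hg1)) (inv_mem hg1)) (inv_mem hg2)) (inv_mem hg1)) hg2) hg2)
theorem m153 : c[(1:Fin 7), 5, 3] ∈ H := hmem (by decide : c[(1:Fin 7), 5, 3] = g2⁻¹*g2⁻¹*g1⁻¹*g2*g2*g2) (mul_mem (mul_mem (mul_mem (mul_mem (mul_mem (inv_mem hg2) (inv_mem hg2)) (inv_mem hg1)) hg2) hg2) hg2)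
theorem m154 : c[(1:Fin 7), 5, 4] ∈ H := hmem (by decide : c[(1:Fin 7), 5, 4] = g1⁻¹*g2⁻¹*g1⁻¹*g2*g2*g1) (mul_mem (mul_mem (mul_mem (mul_mem (mul_mem (inv_mem hg1) (inv_mem hg2)) (inv_mem hg1)) hg2) hg2) hg1)
theorem m156 : c[(1:Fin 7), 5, 6] ∈ H := hmem (by decide : c[(1:Fin 7), 5, 6] = g1*g2*g1⁻¹*g1⁻¹) (mul_mem (mul_mem (mul_mem hg1 hg2) (inv_mem hg1)) (inv_mem hg1))
theorem m162 : c[(1:Fin 7), 6, 2] ∈ H := hmem (by decide : c[(1:Fin 7), 6, 2] = g1*g1*g2⁻¹*g1⁻¹*g2⁻¹*g2⁻¹*g1*g2) (mul_mem (mul_mem (mul_mem (mul_mem (mul_mem (mul_mem (mul_mem hg1 hg1) (inv_mem hg2)) (inv_mem hg1)) (inv_mem hg2)) (inv_mem hg2)) hg1) hg2)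
theorem m163 : c[(1:Fin 7), 6, 3] ∈ H := hmem (by decide : c[(1:Fin 7), 6, 3] = g1*g2*g1*g2⁻¹*g1*g1*g1*g2⁻¹) (mul_mem (mul_mem (mul_mem (mul_mem (mul_mem (mul_mem (mul_mem hg1 hg2) hg1) (inv_mem hg2)) hg1) hg1) hg1) (inv_mem hg2))
theorem m164 : c[(1:Fin 7), 6, 4] ∈ H := hmem (by decide : c[(1:Fin 7), 6, 4] = g1*g2⁻¹*g1*g1*g2⁻¹*g1⁻¹*g2*g1⁻¹) (mul_mem (mul_mem (mul_mem (mul_mem (mul_mem (mul_mem (mul_mem hg1 (inv_mem hg2)) hg1) hg1) (inv_mem hg2)) (inv_mem hg1)) hg2) (inv_mem hg1))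
theorem m165 : c[(1:Fin 7), 6, 5] ∈ H := hmem (by decide : c[(1:Fin 7), 6, 5] = g1*g1*g2⁻¹*g1⁻¹) (mul_mem (mul_mem (mul_mem hg1 hg1) (inv_mem hg2)) (inv_mem hg1))
theorem m234 : c[(2:Fin 7), 3, 4] ∈ H := hmem (by decide : c[(2:Fin 7), 3, 4] = g1*g2⁻¹*g1⁻¹*g1⁻¹*g2*g1*g2*g1⁻¹) (mul_mem (mul_mem (mul_mem (mul_mem (mul_mem (mul_mem (mul_mem hg1 (inv_mem hg2)) (inv_mem hg1)) (inv_mem hg1)) hg2) hg1) hg2) (inv_mem hg1))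
theorem m235 : c[(2:Fin 7), 3, 5] ∈ H := hmem (by decide : c[(2:Fin 7), 3, 5] = g1⁻¹*g1⁻¹*g2*g1) (mul_mem (mul_mem (mul_mem (inv_mem hg1) (inv_mem hg1)) hg2) hg1)
theorem m236 : c[(2:Fin 7), 3, 6] ∈ H := hmem (by decide : c[(2:Fin 7), 3, 6] = g1⁻¹*g2⁻¹*g2⁻¹*g1⁻¹*g2*g1*g2⁻¹*g1⁻¹) (mul_mem (mul_mem (mul_mem (mul_mem (mul_mem (mul_mem (mul_mem (inv_mem hg1) (inv_mem hg2)) (inv_mem hg2)) (inv_mem hg1)) hg2) hg1) (inv_mem hg2)) (inv_mem hg1))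
theorem m243 : c[(2:Fin 7), 4, 3] ∈ H := hmem (by decide : c[(2:Fin 7), 4, 3] = g1*g2⁻¹*g1⁻¹*g2⁻¹*g1*g1*g2*g1⁻¹) (mul_mem (mul_mem (mul_mem (mul_mem (mul_mem (mul_mem (mul_mem hg1 (inv_mem hg2)) (inv_mem hg1)) (inv_mem hg2)) hg1) hg1) hg2) (inv_mem hg1))
theorem m245 : c[(2:Fin 7), 4, 5] ∈ H := hmem (by decide : c[(2:Fin 7), 4, 5] = g1⁻¹*g2*g1⁻¹*g1⁻¹*g2*g1*g2⁻¹*g1) (mul_mem (mul_mem (mul_mem (mul_mem (mul_mem (mul_mem (mul_mem (inv_mem hg1) hg2) (inv_mem hg1)) (inv_mem hg1)) hg2) hg1) (inv_mem hg2)) hg1)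
theorem m246 : c[(2:Fin 7), 4, 6] ∈ H := hmem (by decide : c[(2:Fin 7), 4, 6] = g2*g1*g1*g2⁻¹*g1⁻¹*g2⁻¹) (mul_mem (mul_mem (mul_mem (mul_mem (mul_mem hg2 hg1) hg1) (inv_mem hg2)) (inv_mem hg1)) (inv_mem hg2))
theorem m253 : c[(2:Fin 7), 5, 3] ∈ H := hmem (by decide : c[(2:Fin 7), 5, 3] = g1⁻¹*g2⁻¹*g1*g1) (mul_mem (mul_mem (mul_mem (inv_mem hg1) (inv_mem hg2)) hg1) hg1)
theorem m254 : c[(2:Fin 7), 5, 4] ∈ H := hmem (by decide : c[(2:Fin 7), 5, 4] = g1⁻¹*g2*g1⁻¹*g2⁻¹*g1*g1*g2⁻¹*g1) (mul_mem (mul_mem (mul_mem (mul_mem (mul_mem (mul_mem (mul_mem (inv_mem hg1) hg2) (inv_mem hg1)) (inv_mem hg2)) hg1) hg1) (inv_mem hg2)) hg1)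
theorem m256 : c[(2:Fin 7), 5, 6] ∈ H := hmem (by decide : c[(2:Fin 7), 5, 6] = g2⁻¹*g2⁻¹*g1*g2) (mul_mem (mul_mem (mul_mem (inv_mem hg2) (inv_mem hg2)) hg1) hg2)
theorem m263 : c[(2:Fin 7), 6, 3] ∈ H := hmem (by decide : c[(2:Fin 7), 6, 3] = g1*g2*g1⁻¹*g2⁻¹*g1*g2*g2*g1) (mul_mem (mul_mem (mul_mem (mul_mem (mul_mem (mul_mem (mul_mem hg1 hg2) (inv_mem hg1)) (inv_mem hg2)) hg1) hg2) hg2) hg1)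
theorem m264 : c[(2:Fin 7), 6, 4] ∈ H := hmem (by decide : c[(2:Fin 7), 6, 4] = g2*g1*g2*g1⁻¹*g1⁻¹*g2⁻¹) (mul_mem (mul_mem (mul_mem (mul_mem (mul_mem hg2 hg1) hg2) (inv_mem hg1)) (inv_mem hg1)) (inv_mem hg2))
theorem m265 : c[(2:Fin 7), 6, 5] ∈ H := hmem (by decide : c[(2:Fin 7), 6, 5] = g2⁻¹*g1⁻¹*g2*g2) (mul_mem (mul_mem (mul_mem (inv_mem hg2) (inv_mem hg1)) hg2) hg2)
theorem m345 : c[(3:Fin 7), 4, 5] ∈ H := hmem (by decide : c[(3:Fin 7), 4, 5] = g2*g2*g1*g2*g1⁻¹*g1⁻¹*g2⁻¹*g1⁻¹) (mul_mem (mul_mem (mul_mem (mul_mem (mul_mem (mul_mem (mul_mem hg2 hg2) hg1) hg2) (inv_mem hg1)) (inv_mem hg1)) (inv_mem hg2)) (inv_mem hg1))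
theorem m346 : c[(3:Fin 7), 4, 6] ∈ H := hmem (by decide : c[(3:Fin 7), 4, 6] = g1⁻¹*g2) (mul_mem (inv_mem hg1) hg2)
theorem m354 : c[(3:Fin 7), 5, 4] ∈ H := hmem (by decide : c[(3:Fin 7), 5, 4] = g1*g2*g1*g1*g2⁻¹*g1⁻¹*g2⁻¹*g2⁻¹) (mul_mem (mul_mem (mul_mem (mul_mem (mul_mem (mul_mem (mul_mem hg1 hg2) hg1) hg1) (inv_mem hg2)) (inv_mem hg1)) (inv_mem hg2)) (inv_mem hg2))
theorem m356 : c[(3:Fin 7), 5, 6] ∈ H := hmem (by decide : c[(3:Fin 7), 5, 6] = g2*g1⁻¹*g1⁻¹*g2*g1*g2⁻¹) (mul_mem (mul_mem (mul_mem (mul_mem (mul_mem hg2 (inv_mem hg1)) (inv_mem hg1)) hg2) hg1) (inv_mem hg2))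
theorem m364 : c[(3:Fin 7), 6, 4] ∈ H := hmem (by decide : c[(3:Fin 7), 6, 4] = g2⁻¹*g1) (mul_mem (inv_mem hg2) hg1)
theorem m365 : c[(3:Fin 7), 6, 5] ∈ H := hmem (by decide : c[(3:Fin 7), 6, 5] = g2*g1⁻¹*g2⁻¹*g1*g1*g2⁻¹) (mul_mem (mul_mem (mul_mem (mul_mem (mul_mem hg2 (inv_mem hg1)) (inv_mem hg2)) hg1) hg1) (inv_mem hg2))
theorem m456 : c[(4:Fin 7), 5, 6] ∈ H := hmem (by decide : c[(4:Fin 7), 5, 6] = g2*g2*g1⁻¹*g1⁻¹*g2*g1*g2⁻¹*g2⁻¹) (mul_mem (mul_mem (mul_mem (mul_mem (mul_mem (mul_mem (mul_mem hg2 hg2) (inv_mem hg1)) (inv_mem hg1)) hg2) hg1) (inv_mem hg2)) (inv_mem hg2))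
theorem m465 : c[(4:Fin 7), 6, 5] ∈ H := hmem (by decide : c[(4:Fin 7), 6, 5] = g2*g2*g1⁻¹*g2⁻¹*g1*g1*g2⁻¹*g2⁻¹) (mul_mem (mul_mem (mul_mem (mul_mem (mul_mem (mul_mem (mul_mem hg2 hg2) (inv_mem hg1)) (inv_mem hg2)) hg1) hg1) (inv_mem hg2)) (inv_mem hg2))

theorem triple_mem : ∀ a b c : Fin 7, a ≠ b → b ≠ c → a ≠ c →
    Equiv.swap a b * Equiv.swap b c ∈ H := by
  intro a b c hab hbc hac
  fin_cases a <;> fin_cases b <;> fin_cases c <;>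
    first
      | exact absurd rfl hab
      | exact absurd rfl hbc
      | exact absurd rfl hac
      | skip
  · exact hmem (by decide) m012
  · exact hmem (by decide) m013
  · exact hmem (by decide) m014
  · exact hmem (by decide) m015
  · exact hmem (by decide) m016
  · exact hmem (by decide) m021
  · exact hmem (by decide) m023
  · exact hmem (by decide) m024
  · exact hmem (by decide) m025
  · exact hmem (by decide) m026
  · exact hmem (by decide) m031
  · exact hmem (by decide) m032
  · exact hmem (by decide) m034
  · exact hmem (by decide) m035
  · exact hmem (by decide) m036
  · exact hmem (by decide) m041
  · exact hmem (by decide) m042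
  · exact hmem (by decide) m043
  · exact hmem (by decide) m045
  · exact hmem (by decide) m046
  · exact hmem (by decide) m051
  · exact hmem (by decide) m052
  · exact hmem (by decide) m053
  · exact hmem (by decide) m054
  · exact hmem (by decide) m056
  · exact hmem (by decide) m061
  · exact hmem (by decide) m062
  · exact hmem (by decide) m063
  · exact hmem (by decide) m064
  · exact hmem (by decide) m065
  · exact hmem (by decide) m021
  · exact hmem (by decide) m031
  · exact hmem (by decide) m041
  · exact hmem (by decide) m051
  · exact hmem (by decide) m061
  · exact hmem (by decide) m012
  · exact hmem (by decide) m123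
  · exact hmem (by decide) m124
  · exact hmem (by decide) m125
  · exact hmem (by decide) m126
  · exact hmem (by decide) m013
  · exact hmem (by decide) m132
  · exact hmem (by decide) m134
  · exact hmem (by decide) m135
  · exact hmem (by decide) m136
  · exact hmem (by decide) m014
  · exact hmem (by decide) m142
  · exact hmem (by decide) m143
  · exact hmem (by decide) m145
  · exact hmem (by decide) m146
  · exact hmem (by decide) m015
  · exact hmem (by decide) m152
  · exact hmem (by decide) m153
  · exact hmem (by decide) m154
  · exact hmem (by decide) m156
  · exact hmem (by decide) m016
  · exact hmem (by decide) m162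
  · exact hmem (by decide) m163
  · exact hmem (by decide) m164
  · exact hmem (by decide) m165
  · exact hmem (by decide) m012
  · exact hmem (by decide) m032
  · exact hmem (by decide) m042
  · exact hmem (by decide) m052
  · exact hmem (by decide) m062
  · exact hmem (by decide) m021
  · exact hmem (by decide) m132
  · exact hmem (by decide) m142
  · exact hmem (by decide) m152
  · exact hmem (by decide) m162
  · exact hmem (by decide) m023
  · exact hmem (by decide) m123
  · exact hmem (by decide) m234
  · exact hmem (by decide) m235
  · exact hmem (by decide) m236
  · exact hmem (by decide) m024
  · exact hmem (by decide) m124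
  · exact hmem (by decide) m243
  · exact hmem (by decide) m245
  · exact hmem (by decide) m246
  · exact hmem (by decide) m025
  · exact hmem (by decide) m125
  · exact hmem (by decide) m253
  · exact hmem (by decide) m254
  · exact hmem (by decide) m256
  · exact hmem (by decide) m026
  · exact hmem (by decide) m126
  · exact hmem (by decide) m263
  · exact hmem (by decide) m264
  · exact hmem (by decide) m265
  · exact hmem (by decide) m013
  · exact hmem (by decide) m023
  · exact hmem (by decide) m043
  · exact hmem (by decide) m053
  · exact hmem (by decide) m063
  · exact hmem (by decide) m031
  · exact hmem (by decide) m123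
  · exact hmem (by decide) m143
  · exact hmem (by decide) m153
  · exact hmem (by decide) m163
  · exact hmem (by decide) m032
  · exact hmem (by decide) m132
  · exact hmem (by decide) m243
  · exact hmem (by decide) m253
  · exact hmem (by decide) m263
  · exact hmem (by decide) m034
  · exact hmem (by decide) m134
  · exact hmem (by decide) m234
  · exact hmem (by decide) m345
  · exact hmem (by decide) m346
  · exact hmem (by decide) m035
  · exact hmem (by decide) m135
  · exact hmem (by decide) m235
  · exact hmem (by decide) m354
  · exact hmem (by decide) m356
  · exact hmem (by decide) m036
  · exact hmem (by decide) m136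
  · exact hmem (by decide) m236
  · exact hmem (by decide) m364
  · exact hmem (by decide) m365
  · exact hmem (by decide) m014
  · exact hmem (by decide) m024
  · exact hmem (by decide) m034
  · exact hmem (by decide) m054
  · exact hmem (by decide) m064
  · exact hmem (by decide) m041
  · exact hmem (by decide) m124
  · exact hmem (by decide) m134
  · exact hmem (by decide) m154
  · exact hmem (by decide) m164
  · exact hmem (by decide) m042
  · exact hmem (by decide) m142
  · exact hmem (by decide) m234
  · exact hmem (by decide) m254
  · exact hmem (by decide) m264
  · exact hmem (by decide) m043
  · exact hmem (by decide) m143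
  · exact hmem (by decide) m243
  · exact hmem (by decide) m354
  · exact hmem (by decide) m364
  · exact hmem (by decide) m045
  · exact hmem (by decide) m145
  · exact hmem (by decide) m245
  · exact hmem (by decide) m345
  · exact hmem (by decide) m456
  · exact hmem (by decide) m046
  · exact hmem (by decide) m146
  · exact hmem (by decide) m246
  · exact hmem (by decide) m346
  · exact hmem (by decide) m465
  · exact hmem (by decide) m015
  · exact hmem (by decide) m025
  · exact hmem (by decide) m035
  · exact hmem (by decide) m045
  · exact hmem (by decide) m065
  · exact hmem (by decide) m051
  · exact hmem (by decide) m125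
  · exact hmem (by decide) m135
  · exact hmem (by decide) m145
  · exact hmem (by decide) m165
  · exact hmem (by decide) m052
  · exact hmem (by decide) m152
  · exact hmem (by decide) m235
  · exact hmem (by decide) m245
  · exact hmem (by decide) m265
  · exact hmem (by decide) m053
  · exact hmem (by decide) m153
  · exact hmem (by decide) m253
  · exact hmem (by decide) m345
  · exact hmem (by decide) m365
  · exact hmem (by decide) m054
  · exact hmem (by decide) m154
  · exact hmem (by decide) m254
  · exact hmem (by decide) m354
  · exact hmem (by decide) m465
  · exact hmem (by decide) m056
  · exact hmem (by decide) m156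
  · exact hmem (by decide) m256
  · exact hmem (by decide) m356
  · exact hmem (by decide) m456
  · exact hmem (by decide) m016
  · exact hmem (by decide) m026
  · exact hmem (by decide) m036
  · exact hmem (by decide) m046
  · exact hmem (by decide) m056
  · exact hmem (by decide) m061
  · exact hmem (by decide) m126
  · exact hmem (by decide) m136
  · exact hmem (by decide) m146
  · exact hmem (by decide) m156
  · exact hmem (by decide) m062
  · exact hmem (by decide) m162
  · exact hmem (by decide) m236
  · exact hmem (by decide) m246
  · exact hmem (by decide) m256
  · exact hmem (by decide) m063
  · exact hmem (by decide) m163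
  · exact hmem (by decide) m263
  · exact hmem (by decide) m346
  · exact hmem (by decide) m356
  · exact hmem (by decide) m064
  · exact hmem (by decide) m164
  · exact hmem (by decide) m264
  · exact hmem (by decide) m364
  · exact hmem (by decide) m456
  · exact hmem (by decide) m065
  · exact hmem (by decide) m165
  · exact hmem (by decide) m265
  · exact hmem (by decide) m365
  · exact hmem (by decide) m465



theorem part1 : H = alternatingGroup (Fin 7) := by
  apply le_antisymm
  · refine (Subgroup.closure_le _).2 ?_
    intro x hx
    rcases Set.mem_insert_iff.mp hx with rfl | hx
    · exact Equiv.Perm.mem_alternatingGroup.mpr (by decide)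
    · rw [Set.mem_singleton_iff] at hx
      subst hx
      exact Equiv.Perm.mem_alternatingGroup.mpr (by decide)
  · rw [← Equiv.Perm.closure_three_cycles_eq_alternating]
    refine (Subgroup.closure_le _).2 ?_
    intro σ hσ
    obtain ⟨a, b, c, hab, hbc, hac, rfl⟩ := threeCycle_decomp σ hσ
    exact triple_mem a b c hab hbc hac

theorem part2 : ¬∃ σ : Equiv.Perm (Fin 7), σ⁻¹ * g1 * σ = g1⁻¹ ∧ σ⁻¹ * g2 * σ = g2⁻¹ := by
  rintro ⟨σ, h1, h2⟩
  have h1' : ∀ x : Fin 7, g1 (σ x) = σ (g1⁻¹ x) := by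
    intro x
    have h : g1 * σ = σ * g1⁻¹ := by rw [← h1]; group
    have := congrArg (fun τ : Equiv.Perm (Fin 7) => τ x) h
    simpa [Equiv.Perm.mul_apply] using this
  have h2' : ∀ x : Fin 7, g2 (σ x) = σ (g2⁻¹ x) := by
    intro x
    have h : g2 * σ = σ * g2⁻¹ := by rw [← h2]; group
    have := congrArg (fun τ : Equiv.Perm (Fin 7) => τ x) h
    simpa [Equiv.Perm.mul_apply] using this
  have e1 : ∀ x : Fin 7, σ x = σ (x - 1) - 1 := by
    intro x
    have := h1' x
    rw [show ∀ y : Fin 7, g1 y = y + 1 from by decide, show (g1⁻¹ : Equiv.Perm (Fin 7)) x = x - 1 from by rw [show ∀ y : Fin 7, (g1⁻¹ : Equiv.Perm (Fin 7)) y = y - 1 from by decide]] at this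
    exact eq_sub_of_add_eq this
  have v1 : σ 1 = σ 0 - 1 := by have := e1 1; rwa [show (1:Fin 7) - 1 = 0 from rfl] at this
  have v2 : σ 2 = σ 0 - 1 - 1 := by have := e1 2; rwa [show (2:Fin 7) - 1 = 1 from rfl, v1] at this
  have v3 : σ 3 = σ 0 - 1 - 1 - 1 := by have := e1 3; rwa [show (3:Fin 7) - 1 = 2 from rfl, v2] at this
  have v4 : σ 4 = σ 0 - 1 - 1 - 1 - 1 := by have := e1 4; rwa [show (4:Fin 7) - 1 = 3 from rfl, v3] at this
  have v5 : σ 5 = σ 0 - 1 - 1 - 1 - 1 - 1 := by have := e1 5; rwa [show (5:Fin 7) - 1 = 4 from rfl, v4] at this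
  have v6 : σ 6 = σ 0 - 1 - 1 - 1 - 1 - 1 - 1 := by have := e1 6; rwa [show (6:Fin 7) - 1 = 5 from rfl, v5] at this
  have c1 : g2 (σ 0 - 1 - 1 - 1 - 1) = σ 0 - 1 - 1 - 1 - 1 - 1 - 1 := by
    have := h2' 4
    rwa [show (g2⁻¹ : Equiv.Perm (Fin 7)) 4 = 6 from by decide, v4, v6] at this
  have c2 : g2 (σ 0 - 1 - 1 - 1 - 1 - 1) = σ 0 - 1 - 1 - 1 := by
    have := h2' 5
    rwa [show (g2⁻¹ : Equiv.Perm (Fin 7)) 5 = 3 from by decide, v5, v3] at this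
  obtain ⟨a, ha⟩ : ∃ a, σ 0 = a := ⟨_, rfl⟩
  rw [ha] at c1 c2
  fin_cases a <;> first
    | exact absurd c1 (by decide)
    | exact absurd c2 (by decide)

end AltSevenAux

/-- The 7-cycles `s₁ = (1,2,3,4,5,6,7)` and `s₂ = (1,2,3,4,6,7,5)` (written here on
`Fin 7 = {0, …, 6}` as `(0,1,2,3,4,5,6)` and `(0,1,2,3,5,6,4)`) generate the
alternating group `Alt(7)`, and no permutation `σ ∈ Sym(7)` conjugates both `s₁` to
`s₁⁻¹` and `s₂` to `s₂⁻¹`. -/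
theorem alt_seven_generating_pair_not_invertible :
    let s₁ : Equiv.Perm (Fin 7) := c[0, 1, 2, 3, 4, 5, 6]
    let s₂ : Equiv.Perm (Fin 7) := c[0, 1, 2, 3, 5, 6, 4]
    Subgroup.closure {s₁, s₂} = alternatingGroup (Fin 7) ∧
      ¬∃ σ : Equiv.Perm (Fin 7), σ⁻¹ * s₁ * σ = s₁⁻¹ ∧ σ⁻¹ * s₂ * σ = s₂⁻¹ := by
  intro s₁ s₂
  exact ⟨AltSevenAux.part1, AltSevenAux.part2⟩
end

section
/- The alternating group Alt(7) is not strongly symmetric: there exist x, y ∈ Alt(7) with ⟨x, y⟩ = Alt(7) such that no automorphism φ of Alt(7) satisfies φ(x) = x⁻¹ and φ(y) = y⁻¹. -/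
/-!
Take `x` the 7-cycle `(0 1 2 3 4 5 6)` and `y` the 3-cycle `(3 4 6)`. The subgroup they generate
is transitive on 7 points, hence primitive, and contains a 3-cycle, so by Jordan's theorem it
contains `Alt(7)`; it is generated by even permutations, so it is `Alt(7)`.

An automorphism inverting `x` and `y` composed with inversion is an anti-automorphism fixing
`x` and `y`, so it sends any word in `x, y` to the reversed word and preserves its order. But
`x²yxy²` has order 4 while `y²xyx²` has order 6.
-/

open Equiv Equiv.Perm MulAction

namespace MulAut

variable {G : Type*} [Group G]

theorem map_list_prod_of_map_eq_inv (φ : MulAut G) {l : List G} (hl : ∀ g ∈ l, φ g = g⁻¹) :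
    φ l.prod = l.reverse.prod⁻¹ := by
  rw [map_list_prod, List.map_congr_left hl, List.prod_inv_reverse, List.map_reverse,
    List.reverse_reverse]

theorem orderOf_list_prod_reverse_of_map_eq_inv (φ : MulAut G) {l : List G}
    (hl : ∀ g ∈ l, φ g = g⁻¹) : orderOf l.reverse.prod = orderOf l.prod := by
  rw [← orderOf_inv, ← map_list_prod_of_map_eq_inv φ hl, MulEquiv.orderOf_eq]

theorem not_exists_map_eq_inv_of_orderOf_reverse_ne {x y : G} {l : List G}
    (hl : ∀ g ∈ l, g = x ∨ g = y) (hord : orderOf l.reverse.prod ≠ orderOf l.prod) :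
    ¬∃ φ : MulAut G, φ x = x⁻¹ ∧ φ y = y⁻¹ := by
  rintro ⟨φ, hx, hy⟩
  refine hord (orderOf_list_prod_reverse_of_map_eq_inv φ fun g hg => ?_)
  rcases hl g hg with rfl | rfl
  exacts [hx, hy]

end MulAut

namespace Equiv.Perm

variable {α : Type*} [Fintype α] [DecidableEq α]

theorem isPretransitive_of_isCycle_mem_of_support_eq_univ {G : Subgroup (Perm α)} {g : Perm α}
    (hg : g.IsCycle) (hsupp : g.support = Finset.univ) (hgG : g ∈ G) : IsPretransitive G α := by
  refine ⟨fun a b => ?_⟩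
  have hmoved : ∀ c, g c ≠ c := fun c => mem_support.mp (hsupp ▸ Finset.mem_univ c)
  obtain ⟨i, hi⟩ := hg.exists_zpow_eq (hmoved a) (hmoved b)
  exact ⟨⟨g ^ i, zpow_mem hgG i⟩, hi⟩

theorem alternatingGroup_le_of_isCycle_mem_of_isThreeCycle_mem (hp : (Nat.card α).Prime)
    {G : Subgroup (Perm α)} {g c : Perm α} (hg : g.IsCycle) (hsupp : g.support = Finset.univ)
    (hgG : g ∈ G) (hc : c.IsThreeCycle) (hcG : c ∈ G) : alternatingGroup α ≤ G :=
  have := isPretransitive_of_isCycle_mem_of_support_eq_univ hg hsupp hgG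
  alternatingGroup_le_of_isPreprimitive_of_isThreeCycle_mem (.of_prime_card hp) hc hcG

theorem closure_pair_eq_alternatingGroup (hp : (Nat.card α).Prime) {g c : Perm α}
    (hg : g.IsCycle) (hsupp : g.support = Finset.univ) (hg_even : g ∈ alternatingGroup α)
    (hc : c.IsThreeCycle) : Subgroup.closure {g, c} = alternatingGroup α := by
  refine le_antisymm ?_ ?_
  · rw [Subgroup.closure_le, Set.insert_subset_iff, Set.singleton_subset_iff]
    exact ⟨hg_even, hc.mem_alternatingGroup⟩
  · exact alternatingGroup_le_of_isCycle_mem_of_isThreeCycle_mem hp hg hsupp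
      (Subgroup.subset_closure (Set.mem_insert g {c}))
      hc (Subgroup.subset_closure (Set.mem_insert_of_mem g rfl))

end Equiv.Perm

theorem Subgroup.closure_eq_top_of_closure_image_subtype {G : Type*} [Group G] {H : Subgroup G}
    {s : Set H} (h : closure (((↑) : H → G) '' s) = H) : closure s = ⊤ := by
  apply map_injective H.subtype_injective
  rw [MonoidHom.map_closure, ← MonoidHom.range_eq_map, H.range_subtype]
  exact h

namespace AlternatingGroupSeven

def sevenCycle : alternatingGroup (Fin 7) :=
  ⟨finRotate 7, by rw [mem_alternatingGroup, sign_finRotate]; decide⟩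

theorem isThreeCycle_swap_mul_swap : (swap (3 : Fin 7) 6 * swap 3 4).IsThreeCycle :=
  isThreeCycle_swap_mul_swap_same (by decide) (by decide) (by decide)

def threeCycle : alternatingGroup (Fin 7) :=
  ⟨swap 3 6 * swap 3 4, isThreeCycle_swap_mul_swap.mem_alternatingGroup⟩

theorem closure_sevenCycle_threeCycle : Subgroup.closure {sevenCycle, threeCycle} = ⊤ := by
  apply Subgroup.closure_eq_top_of_closure_image_subtype
  rw [Set.image_pair]
  exact closure_pair_eq_alternatingGroup ((Nat.card_fin 7).symm ▸ Nat.prime_seven) isCycle_finRotate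
    support_finRotate sevenCycle.2 isThreeCycle_swap_mul_swap

def word : List (alternatingGroup (Fin 7)) :=
  [sevenCycle, sevenCycle, threeCycle, sevenCycle, threeCycle, threeCycle]

set_option maxRecDepth 4000 in
theorem orderOf_word_reverse_ne : orderOf word.reverse.prod ≠ orderOf word.prod := by
  have hdvd : orderOf word.prod ∣ 4 := orderOf_dvd_of_pow_eq_one (by decide)
  have hndvd : ¬orderOf word.reverse.prod ∣ 4 := by rw [orderOf_dvd_iff_pow_eq_one]; decide
  intro h
  rw [h] at hndvd
  exact hndvd hdvd

theorem not_exists_mulAut_inverting :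
    ¬∃ φ : MulAut (alternatingGroup (Fin 7)), φ sevenCycle = sevenCycle⁻¹ ∧
      φ threeCycle = threeCycle⁻¹ :=
  MulAut.not_exists_map_eq_inv_of_orderOf_reverse_ne (by simp [word]) orderOf_word_reverse_ne

end AlternatingGroupSeven

open AlternatingGroupSeven in
/-- The alternating group `Alt(7)` is not strongly symmetric: there is a generating
pair `x, y` of `Alt(7)` such that no automorphism of `Alt(7)` inverts both `x` and
`y`. -/
theorem alt_seven_not_strongly_symmetric :
    ¬ StronglySymmetric (alternatingGroup (Fin 7)) ∧
      ∃ x y : alternatingGroup (Fin 7), Subgroup.closure {x, y} = ⊤ ∧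
        ¬∃ φ : MulAut (alternatingGroup (Fin 7)), φ x = x⁻¹ ∧ φ y = y⁻¹ :=
  ⟨fun ⟨_, hall⟩ => not_exists_mulAut_inverting (hall _ _ closure_sevenCycle_threeCycle),
    sevenCycle, threeCycle, closure_sevenCycle_threeCycle, not_exists_mulAut_inverting⟩
end

section
/- For every prime power q there exists a symmetric matrix g ∈ GL(3, F_q) (i.e., gᵀ = g) whose multiplicative order in GL(3, F_q) is exactly q³ − 1. -/
/-!
Let `L/F` be the cubic extension of `F = 𝔽_q`. Multiplication by a generator of `Lˣ` has
order `q ^ 3 - 1`, and it is self-adjoint for every form `(x, y) ↦ c • Tr (x * y)`, so its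
matrix is symmetric in any basis that is orthonormal for such a form. Such a basis exists for a
suitable `c : F`: in odd characteristic one diagonalises the trace form, rescales it so that the
product of the diagonal entries becomes a square, and then uses that `a x² + b y²` represents
`1` to normalise two vectors at a time; in characteristic `2` the identity `Tr (x²) = Tr x ^ 2`
yields an explicit orthonormal basis.
-/

open scoped Matrix MatrixGroups
open Module Polynomial
open LinearMap (BilinForm)

namespace FiniteField

theorem exists_mul_sq_add_mul_sq_eq {K : Type*} [Field K] [Fintype K] (hK : ringChar K ≠ 2)
    {a b : K} (ha : a ≠ 0) (hb : b ≠ 0) (c : K) : ∃ x y : K, a * x ^ 2 + b * y ^ 2 = c := by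
  have hf : (C a * X ^ 2 : K[X]).degree = 2 := by
    rw [degree_C_mul_X_pow 2 ha]; rfl
  have hg : (C b * X ^ 2 - C c : K[X]).degree = 2 := by
    rw [degree_sub_C (by rw [degree_C_mul_X_pow 2 hb]; decide), degree_C_mul_X_pow 2 hb]; rfl
  obtain ⟨x, y, h⟩ := exists_root_sum_quadratic hf hg (odd_card_of_char_ne_two hK)
  exact ⟨x, y, by simpa [← add_sub_assoc, sub_eq_zero] using h⟩

theorem trace_pow_char {K L : Type*} [Field K] [Field L] [Finite L] [Algebra K L]
    (p : ℕ) [ExpChar K p] (x : L) :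
    Algebra.trace K L (x ^ p) = Algebra.trace K L x ^ p := by
  have : ExpChar L p := expChar_of_injective_algebraMap (FaithfulSMul.algebraMap_injective K L) p
  apply FaithfulSMul.algebraMap_injective K L
  simp only [map_pow, algebraMap_trace_eq_sum_pow, sum_pow_char, ← pow_mul, mul_comm]

end FiniteField

namespace LinearMap.BilinForm

variable {K V : Type*} [Field K] [AddCommGroup V] [Module K V]

theorem transpose_toMatrix_eq_self_of_isAdjointPair {ι : Type*} [Fintype ι] [DecidableEq ι]
    {B : BilinForm K V} {e : Basis ι K V} (he : B.toMatrix e = 1) {f : V →ₗ[K] V}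
    (hf : B.IsAdjointPair B f f) : (LinearMap.toMatrix e e f)ᵀ = LinearMap.toMatrix e e f := by
  rw [← Matrix.toBilin_toMatrix e B, he, ← Matrix.toLin_toMatrix e e f] at hf
  simpa [Matrix.IsAdjointPair] using (isAdjointPair_toLinearMap₂ e e 1 1 _ _).mp hf

theorem exists_basis_toMatrix_eq_one [FiniteDimensional K V] {ι : Type*} [Fintype ι]
    [DecidableEq ι] {B : BilinForm K V} {v : ι → V}
    (hv : ∀ i j, B (v i) (v j) = (1 : Matrix ι ι K) i j)
    (hcard : Fintype.card ι = finrank K V) :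
    ∃ e : Basis ι K V, B.toMatrix e = 1 := by
  have hli : LinearIndependent K v :=
    linearIndependent_of_iIsOrtho (fun i j hij => by simpa [hij] using hv i j)
      (fun i => by simp [hv])
  exact ⟨basisOfLinearIndependentOfCardEqFinrank' v hli hcard, by ext i j; simp [hv]⟩

theorem exists_basis_toMatrix_eq_one_of_finrank_eq_three [FiniteDimensional K V]
    {B : BilinForm K V} (hB : B.IsSymm) (h3 : finrank K V = 3) {x y z : V} (hx : B x x = 1)
    (hy : B y y = 1) (hz : B z z = 1) (hxy : B x y = 0) (hxz : B x z = 0) (hyz : B y z = 0) :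
    ∃ e : Basis (Fin 3) K V, B.toMatrix e = 1 := by
  refine exists_basis_toMatrix_eq_one (v := ![x, y, z]) (fun i j => ?_) (by simp [h3])
  fin_cases i <;> fin_cases j <;>
    simp [hx, hy, hz, hxy, hxz, hyz, hB.eq y x, hB.eq z x, hB.eq z y]

theorem exists_apply_eq_zero_apply_eq_one [FiniteDimensional K V] {B : BilinForm K V}
    (hB : B.Nondegenerate) {u v : V} (hv : v ∉ K ∙ u) : ∃ t, B t u = 0 ∧ B t v = 1 := by
  obtain ⟨f, hfv, hfu⟩ := Submodule.exists_dual_map_eq_bot_of_notMem hv inferInstance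
  have hfu : f u = 0 := LinearMap.le_ker_iff_map.mpr hfu (Submodule.mem_span_singleton_self u)
  refine ⟨(f v)⁻¹ • (B.toDual hB).symm f, ?_, ?_⟩ <;>
    simp [apply_toDual_symm_apply, hfu, hfv]

theorem apply_eq_zero_of_mem_span_pair {B : BilinForm K V} {z u w m : V} (hu : B z u = 0)
    (hw : B z w = 0) (hm : m ∈ Submodule.span K {u, w}) : B z m = 0 :=
  (Submodule.span_le (p := LinearMap.ker (B z)).mpr
    (by simp [Set.insert_subset_iff, hu, hw])) hm

section OddCharacteristic

variable [Fintype K]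

theorem exists_mem_span_pair_orthogonal (hK : ringChar K ≠ 2) {B : BilinForm K V}
    (hB : B.IsSymm) {u w : V} (huw : B u w = 0) (hu : B u u ≠ 0) (hw : B w w ≠ 0) :
    ∃ u' ∈ Submodule.span K {u, w}, ∃ w' ∈ Submodule.span K {u, w},
      B u' u' = 1 ∧ B u' w' = 0 ∧ B w' w' = B u u * B w w := by
  obtain ⟨x, y, hxy⟩ := FiniteField.exists_mul_sq_add_mul_sq_eq hK hu hw 1
  refine ⟨x • u + y • w, Submodule.mem_span_pair.mpr ⟨x, y, rfl⟩,
    (-(B w w * y)) • u + (B u u * x) • w, Submodule.mem_span_pair.mpr ⟨_, _, rfl⟩,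
    ?_, ?_, ?_⟩ <;>
    simp only [map_add, map_smul, LinearMap.add_apply, LinearMap.smul_apply, smul_eq_mul, huw,
      hB.eq w u]
  · linear_combination hxy
  · ring
  · linear_combination B u u * B w w * hxy

theorem exists_basis_toMatrix_eq_one_of_isOrthoᵢ (hK : ringChar K ≠ 2) [FiniteDimensional K V]
    {B : BilinForm K V} (hB : B.IsSymm) (h3 : finrank K V = 3) {v : Fin 3 → V}
    (hv : B.IsOrthoᵢ v) (hd : ∀ i, B (v i) (v i) ≠ 0) {s : K} (hs0 : s ≠ 0)
    (hs : B (v 0) (v 0) * B (v 1) (v 1) * B (v 2) (v 2) = s ^ 2) :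
    ∃ e : Basis (Fin 3) K V, B.toMatrix e = 1 := by
  obtain ⟨e₀, he₀, w, hw, h₀₀, h₀w, hww⟩ :=
    exists_mem_span_pair_orthogonal hK hB (hv (by decide : (0 : Fin 3) ≠ 1)) (hd 0) (hd 1)
  have h₂₀ : B (v 2) (v 0) = 0 := hv (by decide)
  have h₂₁ : B (v 2) (v 1) = 0 := hv (by decide)
  have hw₂ : B w (v 2) = 0 := by
    rw [hB.eq]; exact apply_eq_zero_of_mem_span_pair h₂₀ h₂₁ hw
  obtain ⟨e₁, he₁, w', hw', h₁₁, h₁w', hw'w'⟩ :=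
    exists_mem_span_pair_orthogonal hK hB hw₂ (by simp [hww, hd]) (hd 2)
  have h₀₂ : B e₀ (v 2) = 0 := by
    rw [hB.eq]; exact apply_eq_zero_of_mem_span_pair h₂₀ h₂₁ he₀
  have h₀₁ : B e₀ e₁ = 0 := apply_eq_zero_of_mem_span_pair h₀w h₀₂ he₁
  have h₀w' : B e₀ w' = 0 := apply_eq_zero_of_mem_span_pair h₀w h₀₂ hw'
  refine exists_basis_toMatrix_eq_one_of_finrank_eq_three hB h3 h₀₀ h₁₁
    (z := s⁻¹ • w') ?_ h₀₁ ?_ ?_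
  · simp only [map_smul, LinearMap.smul_apply, smul_eq_mul, hw'w', hww, hs]
    field_simp
  · simp [h₀w']
  · simp [h₁w']

theorem exists_smul_toMatrix_eq_one_of_finrank_eq_three (hK : ringChar K ≠ 2)
    [FiniteDimensional K V] {B : BilinForm K V} (hB : B.IsSymm) (hnd : B.Nondegenerate)
    (h3 : finrank K V = 3) :
    ∃ (c : K) (e : Basis (Fin 3) K V), (c • B).toMatrix e = 1 := by
  have : Invertible (2 : K) := invertibleOfNonzero (Ring.two_ne_zero hK)
  obtain ⟨v₀, hv₀⟩ := exists_orthogonal_basis (isSymm_iff.mp hB)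
  let v := v₀.reindex (finCongr h3)
  have hv : B.IsOrthoᵢ v := fun i j hij => by
    simp only [Function.onFun, v, Basis.reindex_apply]
    exact hv₀ ((finCongr h3).symm.injective.ne hij)
  have hd : ∀ i, B (v i) (v i) ≠ 0 := hv.not_isOrtho_basis_self_of_separatingLeft hnd.1
  -- rescaling by `c` turns the product `c` of the diagonal entries into the square `c ^ 4`
  set c := B (v 0) (v 0) * B (v 1) (v 1) * B (v 2) (v 2)
  have hc0 : c ≠ 0 := mul_ne_zero (mul_ne_zero (hd 0) (hd 1)) (hd 2)
  refine ⟨c, exists_basis_toMatrix_eq_one_of_isOrthoᵢ hK (hB.smul c) h3 (v := v)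
    (fun i j hij => mul_eq_zero_of_right c (hv hij)) (fun i => mul_ne_zero hc0 (hd i))
    (pow_ne_zero 2 hc0) ?_⟩
  simp only [LinearMap.smul_apply, smul_eq_mul]
  ring

end OddCharacteristic

end LinearMap.BilinForm

namespace Algebra

open LinearMap.BilinForm

variable {K L : Type*} [Field K] [Field L] [Algebra K L]

/- Since `Tr (x²) = Tr x ^ 2` and `Tr 1 = 3 = 1`, any `s, t` with `Tr s = Tr t = 0` and
`Tr (s * t) = 1` give the orthonormal basis `1 + t, 1 + s, 1 + s + t`. -/
theorem exists_traceForm_toMatrix_eq_one_of_charTwo [Finite L] [CharP K 2]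
    (h3 : finrank K L = 3) : ∃ e : Basis (Fin 3) K L, (traceForm K L).toMatrix e = 1 := by
  have hnd := traceForm_nondegenerate K L
  have htr1 : trace K L 1 = 1 := by
    rw [← map_one (algebraMap K L), trace_algebraMap, h3]
    linear_combination (CharTwo.two_eq_zero : (2 : K) = 0)
  have hsq : ∀ x : L, trace K L (x * x) = trace K L x * trace K L x := fun x => by
    simpa [sq] using FiniteField.trace_pow_char 2 x
  obtain ⟨y, hy⟩ :=
    exists_linearIndependent_pair_of_one_lt_finrank (by omega : 1 < finrank K L) one_ne_zero
  obtain ⟨s, hs1, hsy⟩ := exists_apply_eq_zero_apply_eq_one hnd fun h =>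
    (LinearIndependent.pair_iff' one_ne_zero).mp hy _
      (Submodule.mem_span_singleton.mp h).choose_spec
  have hs : s ∉ K ∙ 1 := by
    intro h
    obtain ⟨a, rfl⟩ := Submodule.mem_span_singleton.mp h
    simp only [map_smul, LinearMap.smul_apply, traceForm_apply, mul_one, htr1, smul_eq_mul] at hs1
    simp [hs1] at hsy
  obtain ⟨t, ht1, hts⟩ := exists_apply_eq_zero_apply_eq_one hnd hs
  simp only [traceForm_apply, mul_one] at hs1 ht1 hts
  refine exists_basis_toMatrix_eq_one_of_finrank_eq_three (traceForm_isSymm K) h3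
    (x := 1 + t) (y := 1 + s) (z := 1 + s + t) ?_ ?_ ?_ ?_ ?_ ?_ <;>
    simp only [map_add, LinearMap.add_apply, traceForm_apply, one_mul, mul_one, hsq, htr1, hs1,
      ht1, hts, mul_comm s t, mul_zero, add_zero, zero_add, CharTwo.add_self_eq_zero]

theorem exists_smul_traceForm_toMatrix_eq_one [Finite L] (h3 : finrank K L = 3) :
    ∃ (c : K) (e : Basis (Fin 3) K L), (c • traceForm K L).toMatrix e = 1 := by
  have : Finite K := .of_injective _ (FaithfulSMul.algebraMap_injective K L)
  have : Fintype K := .ofFinite K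
  by_cases hK : ringChar K = 2
  · have : CharP K 2 := ringChar.of_eq hK
    obtain ⟨e, he⟩ := exists_traceForm_toMatrix_eq_one_of_charTwo h3
    exact ⟨1, e, by rwa [one_smul]⟩
  · exact exists_smul_toMatrix_eq_one_of_finrank_eq_three hK (traceForm_isSymm K)
      (traceForm_nondegenerate K L) h3

theorem transpose_leftMulMatrix_of_smul_traceForm_toMatrix_eq_one {ι : Type*} [Fintype ι]
    [DecidableEq ι] {c : K} {e : Basis ι K L} (he : (c • traceForm K L).toMatrix e = 1)
    (x : L) :
    (leftMulMatrix e x)ᵀ = leftMulMatrix e x := by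
  rw [leftMulMatrix_apply]
  exact transpose_toMatrix_eq_self_of_isAdjointPair he fun y z => by
    simp only [LinearMap.smul_apply, traceForm_apply, coe_lmul_eq_mul, LinearMap.mul_apply',
      mul_assoc, mul_left_comm y x]

end Algebra

theorem exists_symmetric_singer_cycle_general
    (q : ℕ)
    (F : Type*) [Field F] [Fintype F] (hF : Fintype.card F = q) :
    ∃ g : GL (Fin 3) F,
      ((g : Matrix (Fin 3) (Fin 3) F))ᵀ = (g : Matrix (Fin 3) (Fin 3) F) ∧
        orderOf g = q ^ 3 - 1 := by
  have : Fact (ringChar F).Prime := ⟨CharP.char_is_prime F _⟩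
  let L := FiniteField.Extension F (ringChar F) 3
  obtain ⟨c, e, he⟩ :=
    Algebra.exists_smul_traceForm_toMatrix_eq_one (FiniteField.finrank_extension F _ 3)
  obtain ⟨ζ, hζ⟩ := IsCyclic.exists_generator (α := Lˣ)
  refine ⟨Units.map (Algebra.leftMulMatrix e).toMonoidHom ζ,
    Algebra.transpose_leftMulMatrix_of_smul_traceForm_toMatrix_eq_one he ζ, ?_⟩
  rw [orderOf_injective _ (Units.map_injective (Algebra.leftMulMatrix_injective e)) ζ,
    orderOf_eq_card_of_forall_mem_zpowers hζ, Nat.card_units, FiniteField.natCard_extension,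
    Nat.card_eq_fintype_card, hF]

/-- For every prime power `q` there is a symmetric matrix in `GL(3, F_q)` of
multiplicative order exactly `q ^ 3 - 1`. -/
theorem exists_symmetric_singer_cycle
    (q : ℕ) (hq : IsPrimePow q)
    (F : Type*) [Field F] [Fintype F] (hF : Fintype.card F = q) :
    ∃ g : GL (Fin 3) F,
      ((g : Matrix (Fin 3) (Fin 3) F))ᵀ = (g : Matrix (Fin 3) (Fin 3) F) ∧
        orderOf g = q ^ 3 - 1 :=
  exists_symmetric_singer_cycle_general q F hF
end
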